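/- arXiv:1210.1923 — 12 statements merged into one kernel-verified Lean document; each statement's English description precedes it below -/
import Mathlib

section
/- Any automorphism of the Plücker space (L_j, ≁_j) on a connected component L_j of L with respect to ≁ extends to an automorphism of (L, ∼) by acting as the identity on L \ L_j. -/
/-!
Every element of the `≁`-component `C` is `∼`-related to every element outside `C`, since
otherwise the outside element would be reached from `C` by a `≁`-step. Hence pairs with at
most one point in `C` stay `∼`-related under `ψ` (which preserves `C`, being a permutation
fixing its complement), while on pairs inside `C` preserving `≁` is the same as preserving `∼`.
-/

open Relation

theorem Equiv.Perm.apply_mem_of_forall_notMem_eq {α : Type*} {s : Set α} (σ : Equiv.Perm α)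
    (hσ : ∀ x ∉ s, σ x = x) {x : α} (hx : x ∈ s) : σ x ∈ s := by
  by_contra h
  rw [σ.injective (hσ _ h)] at h
  exact h hx

theorem rel_of_reflTransGen_of_not_reflTransGen {L : Type*} {r : L → L → Prop} {c₀ a b : L}
    (ha : ReflTransGen (fun a b => a = b ∨ ¬ r a b) c₀ a)
    (hb : ¬ ReflTransGen (fun a b => a = b ∨ ¬ r a b) c₀ b) : r a b :=
  by_contra fun hab => hb (ha.tail (Or.inr hab))

theorem rel_iff_of_ne_or_not_rel_iff {L M : Type*} {r : L → L → Prop} {s : M → M → Prop}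
    (hr : ∀ x, r x x) (hs : ∀ y, s y y) {f : L → M} (hf : Function.Injective f) {a b : L}
    (h : (a = b ∨ ¬ r a b) ↔ (f a = f b ∨ ¬ s (f a) (f b))) : r a b ↔ s (f a) (f b) := by
  rcases eq_or_ne a b with rfl | hab
  · exact iff_of_true (hr a) (hs (f a))
  · have hfab : f a ≠ f b := hf.ne hab
    simpa only [hab, hfab, false_or, not_iff_not] using h

theorem stmt1_general {L : Type*} (r : L → L → Prop)
    (hrefl : Reflexive r) (hsymm : Symmetric r)
    (c₀ : L) (C : Set L)
    (hC : C = {x | Relation.ReflTransGen (fun a b => a = b ∨ ¬ r a b) c₀ x})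
    (ψ : L ≃ L)
    (hfix : ∀ x ∉ C, ψ x = x)
    (hauto : ∀ a ∈ C, ∀ b ∈ C,
      ((a = b ∨ ¬ r a b) ↔ (ψ a = ψ b ∨ ¬ r (ψ a) (ψ b)))) :
    ∀ a b : L, r a b ↔ r (ψ a) (ψ b) := by
  have hmap : ∀ x ∈ C, ψ x ∈ C := fun _ => Equiv.Perm.apply_mem_of_forall_notMem_eq ψ hfix
  have hcross : ∀ a ∈ C, ∀ b ∉ C, r a b := by
    subst hC
    exact fun a ha b hb => rel_of_reflTransGen_of_not_reflTransGen ha hb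
  intro a b
  by_cases ha : a ∈ C <;> by_cases hb : b ∈ C
  · exact rel_iff_of_ne_or_not_rel_iff hrefl hrefl ψ.injective (hauto a ha b hb)
  · rw [hfix b hb]
    exact iff_of_true (hcross a ha b hb) (hcross _ (hmap a ha) b hb)
  · rw [hfix a ha]
    exact iff_of_true (hsymm (hcross b hb a ha)) (hsymm (hcross _ (hmap b hb) a ha))
  · rw [hfix a ha, hfix b hb]

/-- Any automorphism of the Plücker space on a connected component `C` of `L` with respect
to the relation `≁` (i.e. `fun a b => a = b ∨ ¬ r a b`) extends, by acting as the identity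
outside `C`, to an automorphism of the Plücker space `(L, r)`. -/
theorem stmt1 {L : Type*} (r : L → L → Prop)
    (hrefl : Reflexive r) (hsymm : Symmetric r)
    (hconn : ∀ a b : L, Relation.ReflTransGen r a b)
    (c₀ : L) (C : Set L)
    (hC : C = {x | Relation.ReflTransGen (fun a b => a = b ∨ ¬ r a b) c₀ x})
    (ψ : L ≃ L)
    (hfix : ∀ x ∉ C, ψ x = x)
    (hmap : ∀ x ∈ C, ψ x ∈ C)
    (hauto : ∀ a ∈ C, ∀ b ∈ C,
      ((a = b ∨ ¬ r a b) ↔ (ψ a = ψ b ∨ ¬ r (ψ a) (ψ b)))) :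
    ∀ a b : L, r a b ↔ r (ψ a) (ψ b) :=
  stmt1_general r hrefl hsymm c₀ C hC ψ hfix hauto
end

section
/- In an affine space of dimension at least 2, the relation of lines 'meeting in a point' (a ∼ b iff a ∩ b ≠ ∅) on the set of all lines is reflexive, symmetric, and connected, i.e., it makes the set of lines a Plücker space. -/
variable (k V P : Type*) [DivisionRing k] [AddCommGroup V] [Module k V] [AddTorsor V P]

/-- A subset of the affine space `P` is a line iff it is of the form `{t • v +ᵥ p | t : k}`
with `v ≠ 0`. -/
def IsPLine (s : Set P) : Prop :=
  ∃ (p : P) (v : V), v ≠ 0 ∧ s = {q | ∃ t : k, q = t • v +ᵥ p}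

/-- The set of all lines of the affine space `P`. -/
abbrev PLine : Type _ := {s : Set P // IsPLine k V P s}

/-- Two lines are related iff they have a common point. -/
def PMeets (a b : PLine k V P) : Prop := (a.1 ∩ b.1).Nonempty

namespace PLine

variable {k V P}

lemma self_mem_setOf_smul_vadd (p : P) (v : V) : p ∈ {q | ∃ t : k, q = t • v +ᵥ p} :=
  ⟨0, by rw [zero_smul, zero_vadd]⟩

lemma nonempty (a : PLine k V P) : a.1.Nonempty := by
  obtain ⟨s, p, v, -, rfl⟩ := a
  exact ⟨p, self_mem_setOf_smul_vadd p v⟩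

def through (p q : P) (h : p ≠ q) : PLine k V P :=
  ⟨_, p, q -ᵥ p, vsub_ne_zero.mpr h.symm, rfl⟩

lemma left_mem_through (p q : P) (h : p ≠ q) : p ∈ (through (k := k) p q h).1 :=
  self_mem_setOf_smul_vadd p _

lemma right_mem_through (p q : P) (h : p ≠ q) : q ∈ (through (k := k) p q h).1 :=
  ⟨1, by rw [one_smul, vsub_vadd]⟩

end PLine

section PMeets

variable {k V P}

lemma pMeets_of_mem {a b : PLine k V P} {x : P} (ha : x ∈ a.1) (hb : x ∈ b.1) :
    PMeets k V P a b :=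
  ⟨x, ha, hb⟩

lemma pMeets_refl (a : PLine k V P) : PMeets k V P a a :=
  a.nonempty.mono fun _ hx => ⟨hx, hx⟩

lemma pMeets_symm {a b : PLine k V P} (h : PMeets k V P a b) : PMeets k V P b a := by
  rwa [PMeets, Set.inter_comm]

lemma pMeets_reflTransGen (a b : PLine k V P) : Relation.ReflTransGen (PMeets k V P) a b := by
  obtain ⟨p, hp⟩ := a.nonempty
  obtain ⟨q, hq⟩ := b.nonempty
  by_cases hpq : p = q
  · subst hpq
    exact .single (pMeets_of_mem hp hq)
  · exact .head (pMeets_of_mem hp (PLine.left_mem_through p q hpq))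
      (.single (pMeets_of_mem (PLine.right_mem_through p q hpq) hq))

end PMeets

theorem stmt2 :
    Reflexive (PMeets k V P) ∧ Symmetric (PMeets k V P) ∧
      ∀ a b : PLine k V P, Relation.ReflTransGen (PMeets k V P) a b :=
  ⟨pMeets_refl, fun _ _ => pMeets_symm, pMeets_reflTransGen⟩
end

section
/- In an affine space of dimension at least 3, the relation ≁ on lines (a ≁ b iff a = b or a ∩ b = ∅) is connected, i.e., (L, ≁) is a Plücker space. -/
variable (k V P : Type*) [DivisionRing k] [AddCommGroup V] [Module k V] [AddTorsor V P]

/-!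
Two lines `p + k v` and `q + k w` are disjoint as soon as `q - p ∉ span {v, w}`; in particular
skew lines are disjoint. Otherwise the two lines lie in a common plane through `p` with direction
`span {v, w}`, and since `dim V ≥ 3` there is a vector `z` outside that plane: the line
`(p + z) + k v` is then disjoint from both.
-/

variable {k V P}

theorem exists_notMem_span_pair (hdim : 3 ≤ Module.rank k V) (x y : V) :
    ∃ z, z ∉ Submodule.span k ({x, y} : Set V) := by
  by_contra! h
  have hle : Module.rank k (Submodule.span k ({x, y} : Set V)) ≤ 2 := by
    refine (rank_span_le _).trans ?_
    simpa [one_add_one_eq_two] using Cardinal.mk_insert_le (s := ({y} : Set V)) (a := x)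
  rw [Submodule.eq_top_iff'.mpr h, rank_top] at hle
  exact absurd (hdim.trans hle) (by norm_num)

theorem inter_eq_empty_of_vsub_notMem_span {p q : P} {v w : V}
    (h : q -ᵥ p ∉ Submodule.span k ({v, w} : Set V)) :
    {x | ∃ t : k, x = t • v +ᵥ p} ∩ {x | ∃ t : k, x = t • w +ᵥ q} = ∅ := by
  refine Set.eq_empty_of_forall_notMem ?_
  rintro _ ⟨⟨s, rfl⟩, ⟨t, ht⟩⟩
  have hqp : q -ᵥ p = s • v - t • w := by
    have hs := congrArg (· -ᵥ p) ht
    simp only [vadd_vsub, vadd_vsub_assoc] at hs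
    rw [hs]
    abel
  exact h (hqp ▸ Submodule.sub_mem _ (Submodule.smul_mem _ _ (Submodule.subset_span (by simp)))
    (Submodule.smul_mem _ _ (Submodule.subset_span (by simp))))

variable (k V P)

/-- In an affine space of dimension at least `3`, the relation `≁` on lines
(`a ≁ b` iff `a = b` or `a ∩ b = ∅`) is connected, i.e. `(L, ≁)` is a Plücker space. -/
theorem stmt3 (hdim : 3 ≤ Module.rank k V) :
    ∀ a b : PLine k V P,
      Relation.ReflTransGen (fun x y : PLine k V P => x = y ∨ x.1 ∩ y.1 = ∅) a b := by
  rintro ⟨_, p, v, hv, rfl⟩ ⟨_, q, w, hw, rfl⟩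
  by_cases hpq : q -ᵥ p ∈ Submodule.span k ({v, w} : Set V)
  · obtain ⟨z, hz⟩ := exists_notMem_span_pair hdim v w
    have hpz : (z +ᵥ p) -ᵥ p ∉ Submodule.span k ({v, v} : Set V) := by
      rw [vadd_vsub]
      exact fun h => hz (Submodule.span_mono (by simp) h)
    have hzq : q -ᵥ (z +ᵥ p) ∉ Submodule.span k ({v, w} : Set V) := by
      rw [vsub_vadd_eq_vsub_sub]
      exact fun h => hz (by simpa using sub_mem hpq h)
    exact .head (b := ⟨_, z +ᵥ p, v, hv, rfl⟩) (.inr (inter_eq_empty_of_vsub_notMem_span hpz))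
      (.single (.inr (inter_eq_empty_of_vsub_notMem_span hzq)))
  · exact .single (.inr (inter_eq_empty_of_vsub_notMem_span hpq))
end

section
/- In an affine space, the star of lines through a point Q (the set of all lines incident with Q) is a maximal set of mutually related lines, where lines are related if they meet. -/
/-!
A line `m` that meets every line through `Q` meets in particular the parallel to `m` through `Q`,
and two parallel lines with a common point coincide.
-/

variable (k V P : Type*) [DivisionRing k] [AddCommGroup V] [Module k V] [AddTorsor V P]

namespace AffineSubspace

variable {R M A : Type*} [Ring R] [AddCommGroup M] [Module R M] [AddTorsor M A]

theorem coe_mk'_span_singleton (p : A) (v : M) :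
    (mk' p (R ∙ v) : Set A) = {q | ∃ t : R, q = t • v +ᵥ p} := by
  ext q
  simp [Submodule.mem_span_singleton, eq_vadd_iff_vsub_eq, eq_comm]

theorem mem_mk'_of_inter_nonempty {p q : A} {W : Submodule R M}
    (h : ((mk' p W : Set A) ∩ mk' q W).Nonempty) : q ∈ mk' p W :=
  ext_of_direction_eq (by simp) h ▸ self_mem_mk' q W

end AffineSubspace

open AffineSubspace in
theorem stmt5 (Q : P) :
    (∀ a b : PLine k V P, Q ∈ a.1 → Q ∈ b.1 → PMeets k V P a b) ∧
    (∀ m : PLine k V P, (∀ l : PLine k V P, Q ∈ l.1 → PMeets k V P m l) → Q ∈ m.1) := by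
  refine ⟨fun a b ha hb => ⟨Q, ha, hb⟩, fun m hm => ?_⟩
  obtain ⟨p, v, hv, hm_eq⟩ := m.2
  have hparallel : IsPLine k V P {q | ∃ t : k, q = t • v +ᵥ Q} := ⟨Q, v, hv, rfl⟩
  have hmeet : (m.1 ∩ {q | ∃ t : k, q = t • v +ᵥ Q}).Nonempty := hm ⟨_, hparallel⟩ ⟨0, by simp⟩
  rw [hm_eq, ← coe_mk'_span_singleton, ← coe_mk'_span_singleton] at hmeet
  rw [hm_eq, ← coe_mk'_span_singleton]
  exact mem_mk'_of_inter_nonempty hmeet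
end

section
/- Let A be an affine space of dimension ≥ 2. If S is a set of mutually intersecting lines (any two lines of S meet) that do not all pass through one common point, then all lines of S lie in a common plane. -/
variable (k V P : Type*) [DivisionRing k] [AddCommGroup V] [Module k V] [AddTorsor V P]

/-- A subset of the affine space `P` is a plane iff it is of the form
`{t • v + u • w +ᵥ p | t u : k}` with `v, w` linearly independent. -/
def IsPPlane (s : Set P) : Prop :=
  ∃ (p : P) (v w : V), LinearIndependent k ![v, w] ∧
    s = {q | ∃ t u : k, q = (t • v + u • w) +ᵥ p}

/-! Two distinct lines `a`, `b` of `S` meet in a single point `p`, and some line `c` of `S`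
misses `p`; the three pairwise intersection points `p`, `q ∈ a ∩ c`, `r ∈ b ∩ c` are not
collinear, so they span a plane `E` containing `a`, `b` and `c`. Any other line of `S` meets
`a`, `b`, `c`, and these three share no point, so it meets `E` in two distinct points and
hence lies in `E`. -/

variable {k V P}

namespace IsPLine

lemma nonempty {s : Set P} (hs : IsPLine k V P s) : s.Nonempty := by
  obtain ⟨p, v, -, rfl⟩ := hs
  exact ⟨p, 0, by rw [zero_smul, zero_vadd]⟩

lemma eq_setOf_smul_vsub_vadd {s : Set P} (hs : IsPLine k V P s) {x z : P}
    (hx : x ∈ s) (hz : z ∈ s) (hxz : x ≠ z) :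
    s = {q | ∃ c : k, q = c • (z -ᵥ x) +ᵥ x} := by
  obtain ⟨p, v, -, rfl⟩ := hs
  obtain ⟨tx, rfl⟩ := hx
  obtain ⟨tz, rfl⟩ := hz
  have hzx : (tz • v +ᵥ p) -ᵥ (tx • v +ᵥ p) = (tz - tx) • v := by
    rw [vadd_vsub_vadd_cancel_right, ← sub_smul]
  have htt : tz - tx ≠ 0 := fun h => hxz (by rw [sub_eq_zero.mp h])
  ext q
  simp only [Set.mem_ofPred_eq]
  constructor
  · rintro ⟨t, rfl⟩
    refine ⟨(t - tx) * (tz - tx)⁻¹, ?_⟩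
    rw [hzx, smul_smul, mul_assoc, inv_mul_cancel₀ htt, mul_one, vadd_vadd, ← add_smul,
      sub_add_cancel]
  · rintro ⟨c, rfl⟩
    exact ⟨c * (tz - tx) + tx, by rw [hzx, smul_smul, vadd_vadd, ← add_smul]⟩

lemma inter_subsingleton {a b : Set P} (ha : IsPLine k V P a) (hb : IsPLine k V P b)
    (hab : a ≠ b) : (a ∩ b).Subsingleton := by
  intro x ⟨hxa, hxb⟩ z ⟨hza, hzb⟩
  by_contra hxz
  rw [ha.eq_setOf_smul_vsub_vadd hxa hza hxz, hb.eq_setOf_smul_vsub_vadd hxb hzb hxz] at hab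
  exact hab rfl

lemma subset_of_mem {s : Set P} (hs : IsPLine k V P s) (E : AffineSubspace k P) {x z : P}
    (hx : x ∈ s) (hz : z ∈ s) (hxz : x ≠ z) (hxE : x ∈ E) (hzE : z ∈ E) : s ⊆ E := by
  rw [hs.eq_setOf_smul_vsub_vadd hx hz hxz]
  rintro y ⟨c, rfl⟩
  exact E.smul_vsub_vadd_mem c hzE hxE hxE

lemma linearIndependent_vsub {s : Set P} (hs : IsPLine k V P s) {p q r : P}
    (hp : p ∈ s) (hr : r ∈ s) (hpr : p ≠ r) (hq : q ∉ s) :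
    LinearIndependent k ![q -ᵥ p, r -ᵥ p] := by
  rw [linearIndependent_fin2]
  refine ⟨fun h => hpr (vsub_eq_zero_iff_eq.mp h).symm, fun t ht => hq ?_⟩
  rw [hs.eq_setOf_smul_vsub_vadd hp hr hpr]
  exact ⟨t, by simp only [Matrix.cons_val_one, Matrix.cons_val_zero] at ht; rw [ht, vsub_vadd]⟩

lemma subset_of_inter_nonempty_of_inter_eq_empty {s a b c : Set P} (hs : IsPLine k V P s)
    (E : AffineSubspace k P) (haE : a ⊆ E) (hbE : b ⊆ E) (hcE : c ⊆ E)
    (habc : a ∩ b ∩ c = ∅) (hsa : (s ∩ a).Nonempty) (hsb : (s ∩ b).Nonempty)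
    (hsc : (s ∩ c).Nonempty) : s ⊆ E := by
  obtain ⟨x, hxs, hxa⟩ := hsa
  obtain ⟨y, hys, hyb⟩ := hsb
  obtain ⟨z, hzs, hzc⟩ := hsc
  by_cases hxy : x = y
  · by_cases hxz : x = z
    · subst hxy hxz
      exact absurd habc (Set.nonempty_iff_ne_empty.mp ⟨x, ⟨hxa, hyb⟩, hzc⟩)
    · exact hs.subset_of_mem E hxs hzs hxz (haE hxa) (hcE hzc)
  · exact hs.subset_of_mem E hxs hys hxy (haE hxa) (hbE hyb)

end IsPLine

lemma coe_mk'_span_pair (p : P) (v w : V) :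
    (AffineSubspace.mk' p (Submodule.span k {v, w}) : Set P) =
      {q | ∃ t u : k, q = (t • v + u • w) +ᵥ p} := by
  ext q
  simp only [SetLike.mem_coe, AffineSubspace.mem_mk', Submodule.mem_span_pair,
    Set.mem_ofPred_eq, eq_vadd_iff_vsub_eq, eq_comm (a := q -ᵥ p)]

lemma isPPlane_mk'_span_pair {v w : V} (hvw : LinearIndependent k ![v, w]) (p : P) :
    IsPPlane k V P (AffineSubspace.mk' p (Submodule.span k {v, w})) :=
  ⟨p, v, w, hvw, coe_mk'_span_pair p v w⟩

lemma exists_mem_ne_of_forall_exists_notMem {S : Set (PLine k V P)}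
    (hS : ∀ Q : P, ∃ s ∈ S, Q ∉ s.1) : ∃ a ∈ S, ∃ b ∈ S, a.1 ≠ b.1 := by
  obtain ⟨a, haS, -⟩ := hS (Classical.arbitrary P)
  obtain ⟨p, hpa⟩ := a.2.nonempty
  obtain ⟨b, hbS, hpb⟩ := hS p
  exact ⟨a, haS, b, hbS, fun h => hpb (h ▸ hpa)⟩

variable (k V P)

theorem stmt7
    (S : Set (PLine k V P))
    (hSmeet : ∀ s ∈ S, ∀ t ∈ S, PMeets k V P s t)
    (hnoQ : ¬ ∃ Q : P, ∀ s ∈ S, Q ∈ s.1) :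
    ∃ E : Set P, IsPPlane k V P E ∧ ∀ s ∈ S, s.1 ⊆ E := by
  push Not at hnoQ
  obtain ⟨a, haS, b, hbS, hab⟩ := exists_mem_ne_of_forall_exists_notMem hnoQ
  obtain ⟨p, hpa, hpb⟩ := hSmeet a haS b hbS
  obtain ⟨c, hcS, hpc⟩ := hnoQ p
  obtain ⟨q, hqa, hqc⟩ := hSmeet a haS c hcS
  obtain ⟨r, hrb, hrc⟩ := hSmeet b hbS c hcS
  have hp_unique : ∀ x ∈ a.1 ∩ b.1, x = p := fun x hx =>
    a.2.inter_subsingleton b.2 hab hx ⟨hpa, hpb⟩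
  have hqp : q ≠ p := fun h => hpc (h ▸ hqc)
  have hrp : r ≠ p := fun h => hpc (h ▸ hrc)
  have hqb : q ∉ b.1 := fun h => hqp (hp_unique q ⟨hqa, h⟩)
  have hqr : q ≠ r := fun h => hqb (h ▸ hrb)
  set E := AffineSubspace.mk' p (Submodule.span k {q -ᵥ p, r -ᵥ p})
  have hpE : p ∈ E := AffineSubspace.self_mem_mk' _ _
  have hqE : q ∈ E := AffineSubspace.mem_mk'.mpr (Submodule.subset_span (by simp))
  have hrE : r ∈ E := AffineSubspace.mem_mk'.mpr (Submodule.subset_span (by simp))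
  have haE := a.2.subset_of_mem E hpa hqa hqp.symm hpE hqE
  have hbE := b.2.subset_of_mem E hpb hrb hrp.symm hpE hrE
  have hcE := c.2.subset_of_mem E hqc hrc hqr hqE hrE
  have habc : a.1 ∩ b.1 ∩ c.1 = ∅ :=
    Set.eq_empty_iff_forall_notMem.mpr fun x ⟨hx, hxc⟩ => hpc (hp_unique x hx ▸ hxc)
  refine ⟨E, isPPlane_mk'_span_pair (b.2.linearIndependent_vsub hpb hrb hrp.symm hqb) p,
    fun s hs => s.2.subset_of_inter_nonempty_of_inter_eq_empty E haE hbE hcE habc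
      (hSmeet s hs a haS) (hSmeet s hs b hbS) (hSmeet s hs c hcS)⟩
end

section
/- Let A, A' be affine spaces with dim A' ≥ 3, and let φ be an isomorphism of the Plücker space of lines of A (related = meeting) onto that of A'. Then for every point Q of A, the image φ(L(Q)) of the star of lines through Q is contained in a star of lines of A'. -/
/-!
If `dim A < 3`, two disjoint lines of `A` are parallel, so two meeting lines that both miss a
third line coincide; in `A'` there are two meeting lines missing a common (skew) line, and `φ⁻¹`
would carry this configuration to `A`. Hence `dim A ≥ 3`, and the star of `Q` is the set of common
transversals of three of its lines `a, b, e` with independent directions. Its image under `φ` is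
a set of pairwise meeting common transversals of `φ a, φ b, φ e` containing a fourth line. For a
triangle, two parallels through two vertices give disjoint transversals unless the field is
`𝔽₂`, where the sides are the only transversals; so `φ a, φ b, φ e` pass through a point `Q'`,
and then every common transversal of them passes through `Q'`.
-/

variable (k V P : Type*) [DivisionRing k] [AddCommGroup V] [Module k V] [AddTorsor V P]

variable (k' V' P' : Type*) [DivisionRing k'] [AddCommGroup V'] [Module k' V'] [AddTorsor V' P']

local infix:50 " ∼ " => PMeets _ _ _

section Lines

variable {F M X : Type*} [DivisionRing F] [AddCommGroup M] [Module F M] [AddTorsor M X]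

lemma LinearIndependent.eq_zero_of_fin_three {f : Fin 3 → M} (hf : LinearIndependent F f)
    {a b c : F} (h : a • f 0 + b • f 1 + c • f 2 = 0) : a = 0 ∧ b = 0 ∧ c = 0 := by
  have h0 := Fintype.linearIndependent_iff.1 hf ![a, b, c]
    (by simpa [Fin.sum_univ_three, add_assoc] using h)
  exact ⟨h0 0, h0 1, h0 2⟩

variable (F) in
def lineSet (p : X) (v : M) : Set X :=
  {q | ∃ t : F, q = t • v +ᵥ p}

lemma smul_vadd_mem_lineSet (t : F) (p : X) (v : M) : t • v +ᵥ p ∈ lineSet F p v :=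
  ⟨t, rfl⟩

lemma mem_lineSet_self (p : X) (v : M) : p ∈ lineSet F p v :=
  ⟨0, by rw [zero_smul, zero_vadd]⟩

lemma vadd_mem_lineSet (p : X) (v : M) : v +ᵥ p ∈ lineSet F p v :=
  ⟨1, by rw [one_smul]⟩

lemma lineSet_eq_of_mem {p q : X} {v : M} (h : q ∈ lineSet F p v) :
    lineSet F q v = lineSet F p v := by
  obtain ⟨s, rfl⟩ := h
  ext r
  constructor
  · rintro ⟨t, rfl⟩
    exact ⟨t + s, by rw [vadd_vadd, add_smul]⟩
  · rintro ⟨t, rfl⟩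
    exact ⟨t - s, by rw [vadd_vadd, ← add_smul, sub_add_cancel]⟩

lemma lineSet_eq_of_inter_nonempty {p q : X} {v : M}
    (h : (lineSet F p v ∩ lineSet F q v).Nonempty) : lineSet F p v = lineSet F q v := by
  obtain ⟨r, hp, hq⟩ := h
  rw [← lineSet_eq_of_mem hp, lineSet_eq_of_mem hq]

lemma lineSet_smul {t : F} (ht : t ≠ 0) (p : X) (v : M) :
    lineSet F p (t • v) = lineSet F p v := by
  ext r
  constructor
  · rintro ⟨s, rfl⟩
    exact ⟨s * t, by rw [mul_smul]⟩
  · rintro ⟨s, rfl⟩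
    exact ⟨s * t⁻¹, by rw [smul_smul, mul_assoc, inv_mul_cancel₀ ht, mul_one]⟩

lemma lineSet_eq_vsub {p x y : X} {v : M} (hx : x ∈ lineSet F p v) (hy : y ∈ lineSet F p v)
    (hxy : x ≠ y) : lineSet F p v = lineSet F x (y -ᵥ x) := by
  obtain ⟨s, rfl⟩ := hx
  obtain ⟨t, rfl⟩ := hy
  have hts : t - s ≠ 0 := sub_ne_zero.2 fun h => hxy (by rw [h])
  rw [vadd_vsub_vadd_cancel_right, ← sub_smul, lineSet_smul hts, lineSet_eq_of_mem ⟨s, rfl⟩]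

lemma exists_smul_eq_of_lineSet_eq {q : X} {u v : M} (h : lineSet F q u = lineSet F q v) :
    ∃ t : F, t • v = u := by
  obtain ⟨t, ht⟩ : u +ᵥ q ∈ lineSet F q v := h ▸ vadd_mem_lineSet q u
  exact ⟨t, (vadd_right_cancel q ht).symm⟩

end Lines

namespace PLine

variable {F M X : Type*} [DivisionRing F] [AddCommGroup M] [Module F M] [AddTorsor M X]

variable (F) in
def ofDir (p : X) {v : M} (hv : v ≠ 0) : PLine F M X :=
  ⟨lineSet F p v, p, v, hv, rfl⟩

lemma exists_eq_lineSet (l : PLine F M X) : ∃ (p : X) (v : M), v ≠ 0 ∧ l.1 = lineSet F p v :=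
  l.2

lemma ofDir_ne_ofDir {p : X} {u v : M} {hu : u ≠ 0} {hv : v ≠ 0} (h : ∀ t : F, t • v ≠ u) :
    ofDir F p hu ≠ ofDir F p hv := fun huv =>
  (exists_smul_eq_of_lineSet_eq (congrArg Subtype.val huv)).elim h

lemma ofDir_ne_ofDir_of_linearIndependent {ι : Type*} {f : ι → M} (hf : LinearIndependent F f)
    (p : X) {i j : ι} (hij : i ≠ j) : ofDir F p (hf.ne_zero i) ≠ ofDir F p (hf.ne_zero j) :=
  ofDir_ne_ofDir fun t ht => hf.notMem_span_image (s := {j}) (x := i) hij <| by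
    rw [Set.image_singleton, ← ht]
    exact Submodule.smul_mem _ t (Submodule.mem_span_singleton_self _)

lemma exists_eq_lineSet_of_mem (l : PLine F M X) {q : X} (hq : q ∈ l.1) :
    ∃ v : M, v ≠ 0 ∧ l.1 = lineSet F q v := by
  obtain ⟨p, v, hv, hl⟩ := l.exists_eq_lineSet
  exact ⟨v, hv, hl.trans (lineSet_eq_of_mem (hl ▸ hq : q ∈ lineSet F p v)).symm⟩

lemma eq_lineSet_vsub (l : PLine F M X) {x y : X} (hx : x ∈ l.1) (hy : y ∈ l.1) (hxy : x ≠ y) :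
    l.1 = lineSet F x (y -ᵥ x) := by
  obtain ⟨p, v, -, hl⟩ := l.exists_eq_lineSet
  exact hl.trans (lineSet_eq_vsub (hl ▸ hx : x ∈ lineSet F p v) (hl ▸ hy) hxy)

lemma eq_of_mem_of_mem {l m : PLine F M X} {x y : X} (hxl : x ∈ l.1) (hyl : y ∈ l.1)
    (hxm : x ∈ m.1) (hym : y ∈ m.1) (hxy : x ≠ y) : l = m :=
  Subtype.ext ((l.eq_lineSet_vsub hxl hyl hxy).trans (m.eq_lineSet_vsub hxm hym hxy).symm)

lemma exists_smul_eq_of_not_meets (hM : Module.rank F M < 3) {l n : PLine F M X} (hln : ¬ l ∼ n)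
    {p q : X} {w₁ w₂ : M} (hl : l.1 = lineSet F p w₁) (hn : n.1 = lineSet F q w₂) (hw₁ : w₁ ≠ 0) :
    ∃ t : F, t • w₁ = w₂ := by
  by_contra! h
  have hw : LinearIndependent F ![w₁, w₂] := (LinearIndependent.pair_iff' hw₁).2 h
  have hqp : q -ᵥ p ∉ Submodule.span F (Set.range ![w₁, w₂]) := by
    rw [Matrix.range_cons_cons_empty, Submodule.mem_span_pair]
    rintro ⟨s, t, hst⟩
    refine hln ⟨s • w₁ +ᵥ p, hl ▸ smul_vadd_mem_lineSet s p w₁, hn ▸ ⟨-t, ?_⟩⟩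
    rw [← vsub_vadd q p, ← hst, vadd_vadd, neg_smul]
    congr 1
    abel
  have h3 := (natCast_le_rank_iff (n := 3)).2 ⟨_, linearIndependent_finCons.2 ⟨hw, hqp⟩⟩
  exact not_le.2 hM (by exact_mod_cast h3)

lemma eq_of_meets_of_not_meets (hM : Module.rank F M < 3) {l m n : PLine F M X} (hlm : l ∼ m)
    (hln : ¬ l ∼ n) (hmn : ¬ m ∼ n) : l = m := by
  obtain ⟨x, hxl, hxm⟩ := hlm
  obtain ⟨wl, hwl, hl⟩ := l.exists_eq_lineSet_of_mem hxl
  obtain ⟨wm, hwm, hm⟩ := m.exists_eq_lineSet_of_mem hxm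
  obtain ⟨p, wn, hwn, hn⟩ := n.exists_eq_lineSet
  obtain ⟨s, rfl⟩ := exists_smul_eq_of_not_meets hM hln hl hn hwl
  obtain ⟨t, ht⟩ := exists_smul_eq_of_not_meets hM hmn hm hn hwm
  have hs : s ≠ 0 := left_ne_zero_of_smul hwn
  have ht0 : t ≠ 0 := left_ne_zero_of_smul (ht ▸ hwn)
  exact Subtype.ext (by rw [hl, hm, ← lineSet_smul hs x wl, ← lineSet_smul ht0 x wm, ht])

lemma vsub_mem_span_pair_of_meets {p q : X} {u v : M} {hu : u ≠ 0} {hv : v ≠ 0}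
    (h : ofDir F p hu ∼ ofDir F q hv) : q -ᵥ p ∈ Submodule.span F {u, v} := by
  obtain ⟨x, ⟨s, rfl⟩, t, ht⟩ := h
  refine Submodule.mem_span_pair.2 ⟨s, -t, ?_⟩
  rw [← vsub_sub_vsub_cancel_left q p (s • u +ᵥ p), vadd_vsub, ht, vadd_vsub, neg_smul,
    sub_eq_add_neg]

lemma exists_meets_not_meets (hM : 3 ≤ Module.rank F M) :
    ∃ l m n : PLine F M X, l ≠ m ∧ l ∼ m ∧ ¬ l ∼ n ∧ ¬ m ∼ n := by
  obtain ⟨f, hf⟩ := exists_linearIndependent_of_le_rank hM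
  obtain ⟨O⟩ := (inferInstance : Nonempty X)
  have hf2 : f 2 ∉ Submodule.span F {f 0, f 1} := by
    simpa [Set.image_pair] using hf.notMem_span_image (s := {0, 1}) (x := 2) (by decide)
  refine ⟨ofDir F O (hf.ne_zero 0), ofDir F O (hf.ne_zero 1), ofDir F (f 2 +ᵥ O) (hf.ne_zero 0),
    ofDir_ne_ofDir_of_linearIndependent hf O (by decide),
    ⟨O, mem_lineSet_self O _, mem_lineSet_self O _⟩, fun h => hf2 ?_, fun h => hf2 ?_⟩
  · have := vsub_mem_span_pair_of_meets h
    rw [vadd_vsub, Set.pair_eq_singleton] at this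
    exact Submodule.span_mono (Set.singleton_subset_iff.2 (Set.mem_insert _ _)) this
  · have := vsub_mem_span_pair_of_meets h
    rwa [vadd_vsub, Set.pair_comm] at this

lemma eq_or_eq_of_mem (hF : ∀ μ : F, μ = 0 ∨ μ = 1) (l : PLine F M X) {x y q : X} (hx : x ∈ l.1)
    (hy : y ∈ l.1) (hxy : x ≠ y) (hq : q ∈ l.1) : q = x ∨ q = y := by
  obtain ⟨t, rfl⟩ := l.eq_lineSet_vsub hx hy hxy ▸ hq
  rcases hF t with rfl | rfl
  · exact .inl (by rw [zero_smul, zero_vadd])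
  · exact .inr (by rw [one_smul, vsub_vadd])

def transversals (A B C : PLine F M X) : Set (PLine F M X) :=
  {d | d ∼ A ∧ d ∼ B ∧ d ∼ C}

def IsClique (S : Set (PLine F M X)) : Prop :=
  ∀ d ∈ S, ∀ e ∈ S, d ∼ e

lemma mem_transversals_ofDir_iff {f : Fin 3 → M} (hf : LinearIndependent F f) (Q : X)
    (d : PLine F M X) :
    d ∈ transversals (ofDir F Q (hf.ne_zero 0)) (ofDir F Q (hf.ne_zero 1))
      (ofDir F Q (hf.ne_zero 2)) ↔ Q ∈ d.1 := by
  refine ⟨fun hd => ?_, fun hQ =>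
    ⟨⟨Q, hQ, mem_lineSet_self Q _⟩, ⟨Q, hQ, mem_lineSet_self Q _⟩, ⟨Q, hQ, mem_lineSet_self Q _⟩⟩⟩
  obtain ⟨⟨_, hxd, s, rfl⟩, ⟨_, hyd, t, rfl⟩, ⟨_, hzd, r, rfl⟩⟩ := hd
  by_cases hxy : s • f 0 +ᵥ Q = t • f 1 +ᵥ Q
  · have hs := (hf.eq_zero_of_fin_three (a := s) (b := -t) (c := 0)
      (by rw [vadd_right_cancel Q hxy, neg_smul, zero_smul, add_zero, add_neg_cancel])).1
    rwa [hs, zero_smul, zero_vadd] at hxd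
  · obtain ⟨τ, hτ⟩ := d.eq_lineSet_vsub hxd hyd hxy ▸ hzd
    rw [vadd_vsub_vadd_cancel_right, vadd_vadd] at hτ
    have hr := (hf.eq_zero_of_fin_three (a := s - τ * s) (b := τ * t) (c := -r)
      (by rw [neg_smul, vadd_right_cancel Q hτ]; match_scalars <;> noncomm_ring)).2.2
    rwa [neg_eq_zero.1 hr, zero_smul, zero_vadd] at hzd

lemma exists_mem_notMem_ofDir {f : Fin 3 → M} (hf : LinearIndependent F f) (Q : X) :
    ∃ d : PLine F M X, Q ∈ d.1 ∧ d ∉ ({ofDir F Q (hf.ne_zero 0), ofDir F Q (hf.ne_zero 1),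
      ofDir F Q (hf.ne_zero 2)} : Set (PLine F M X)) := by
  have h01 : f 0 + f 1 ≠ 0 := fun h => one_ne_zero (hf.eq_zero_of_fin_three (a := 1) (b := 1)
    (c := 0) (by rw [one_smul, one_smul, zero_smul, add_zero, h])).1
  refine ⟨ofDir F Q h01, mem_lineSet_self Q _, ?_⟩
  simp only [Set.mem_insert_iff, Set.mem_singleton_iff, not_or]
  refine ⟨ofDir_ne_ofDir fun t ht => ?_, ofDir_ne_ofDir fun t ht => ?_,
    ofDir_ne_ofDir fun t ht => ?_⟩
  · refine one_ne_zero (neg_eq_zero.1 (hf.eq_zero_of_fin_three (a := t - 1) (b := -1) (c := 0)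
      ?_).2.1)
    rw [← sub_eq_zero.2 ht]; match_scalars <;> noncomm_ring
  · refine one_ne_zero (neg_eq_zero.1 (hf.eq_zero_of_fin_three (a := -1) (b := t - 1) (c := 0)
      ?_).1)
    rw [← sub_eq_zero.2 ht]; match_scalars <;> noncomm_ring
  · refine one_ne_zero (neg_eq_zero.1 (hf.eq_zero_of_fin_three (a := -1) (b := -1) (c := t)
      ?_).1)
    rw [← sub_eq_zero.2 ht]; match_scalars <;> noncomm_ring

lemma mem_of_mem_transversals_of_concurrent {A B C d : PLine F M X} {x : X} (hxA : x ∈ A.1)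
    (hxB : x ∈ B.1) (hxC : x ∈ C.1) (hT : IsClique (transversals A B C))
    (hd : d ∈ transversals A B C) : x ∈ d.1 := by
  obtain ⟨p, z, hz, hdz⟩ := d.exists_eq_lineSet
  -- the parallel to `d` through `x` is a transversal, so it meets `d` and hence equals it
  have hx : x ∈ (ofDir F x hz).1 := mem_lineSet_self x z
  have hg : ofDir F x hz ∈ transversals A B C := ⟨⟨x, hx, hxA⟩, ⟨x, hx, hxB⟩, ⟨x, hx, hxC⟩⟩
  obtain ⟨r, hrd, hrg⟩ := hT d hd _ hg
  rw [hdz] at hrd ⊢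
  rw [lineSet_eq_of_inter_nonempty ⟨r, hrd, hrg⟩]
  exact hx

lemma transversals_subset_of_triangle (hF : ∀ μ : F, μ = 0 ∨ μ = 1) {A B C : PLine F M X}
    {x y z : X} (hxA : x ∈ A.1) (hxB : x ∈ B.1) (hyA : y ∈ A.1) (hyC : y ∈ C.1) (hzB : z ∈ B.1)
    (hzC : z ∈ C.1) (hxy : x ≠ y) (hxz : x ≠ z) (hyz : y ≠ z) :
    transversals A B C ⊆ {A, B, C} := by
  rintro d ⟨⟨a, had, haA⟩, ⟨b, hbd, hbB⟩, ⟨c, hcd, hcC⟩⟩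
  rcases A.eq_or_eq_of_mem hF hxA hyA hxy haA with rfl | rfl
  · rcases C.eq_or_eq_of_mem hF hyC hzC hyz hcC with rfl | rfl
    · exact .inl (eq_of_mem_of_mem had hcd hxA hyA hxy)
    · exact .inr (.inl (eq_of_mem_of_mem had hcd hxB hzB hxz))
  · rcases B.eq_or_eq_of_mem hF hxB hzB hxz hbB with rfl | rfl
    · exact .inl (eq_of_mem_of_mem hbd had hxA hyA hxy)
    · exact .inr (.inr (eq_of_mem_of_mem had hbd hyC hzC hyz))

lemma exists_triangle_coords {A B C : PLine F M X} {x y z : X} (hAB : A ≠ B) (hxA : x ∈ A.1)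
    (hxB : x ∈ B.1) (hyA : y ∈ A.1) (hyC : y ∈ C.1) (hzB : z ∈ B.1) (hzC : z ∈ C.1)
    (hxy : x ≠ y) (hxz : x ≠ z) (hyz : y ≠ z) :
    ∃ u v : M, LinearIndependent F ![u, v] ∧ A.1 = lineSet F x u ∧ B.1 = lineSet F x v ∧
      C.1 = lineSet F (u +ᵥ x) (v - u) := by
  have hA := A.eq_lineSet_vsub hxA hyA hxy
  refine ⟨y -ᵥ x, z -ᵥ x, (LinearIndependent.pair_iff' (vsub_ne_zero.2 hxy.symm)).2
    fun t ht => hAB (eq_of_mem_of_mem hxA ?_ hxB hzB hxz), hA, B.eq_lineSet_vsub hxB hzB hxz, ?_⟩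
  · rw [hA, ← vsub_vadd z x, ← ht]
    exact smul_vadd_mem_lineSet t x _
  · rw [vsub_vadd, vsub_sub_vsub_cancel_right]
    exact C.eq_lineSet_vsub hyC hzC hyz

lemma not_isClique_transversals_of_triangle {A B C : PLine F M X} {x : X} {u v : M}
    (huv : LinearIndependent F ![u, v]) (hA : A.1 = lineSet F x u) (hB : B.1 = lineSet F x v)
    (hC : C.1 = lineSet F (u +ᵥ x) (v - u)) {μ : F} (hμ0 : μ ≠ 0) (hμ1 : μ ≠ 1) :
    ¬ IsClique (transversals A B C) := by
  have h1μ : 1 - μ ≠ 0 := sub_ne_zero.2 hμ1.symm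
  -- the parallels through the vertices `x` and `u +ᵥ x` in direction `w` are both transversals
  set w := (1 - μ) • u + μ • v with hw_def
  have hw : w ≠ 0 := fun h => h1μ (LinearIndependent.pair_iff.1 huv _ _ h).1
  have hT : ofDir F x hw ∈ transversals A B C := by
    refine ⟨⟨x, mem_lineSet_self x w, hA ▸ mem_lineSet_self x u⟩,
      ⟨x, mem_lineSet_self x w, hB ▸ mem_lineSet_self x v⟩,
      ⟨w +ᵥ x, vadd_mem_lineSet x w, hC ▸ ⟨μ, ?_⟩⟩⟩
    rw [vadd_vadd, hw_def]
    congr 1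
    match_scalars <;> noncomm_ring
  have hS : ofDir F (u +ᵥ x) hw ∈ transversals A B C := by
    refine ⟨⟨u +ᵥ x, mem_lineSet_self _ w, hA ▸ vadd_mem_lineSet x u⟩,
      ⟨_, ⟨-(1 - μ)⁻¹, rfl⟩, hB ▸ ⟨-(1 - μ)⁻¹ * μ, ?_⟩⟩,
      ⟨u +ᵥ x, mem_lineSet_self _ w, hC ▸ mem_lineSet_self _ _⟩⟩
    rw [vadd_vadd, hw_def, smul_add, smul_smul, smul_smul, neg_mul, inv_mul_cancel₀ h1μ,
      neg_one_smul]
    congr 1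
    abel
  intro hclique
  obtain ⟨t, ht⟩ : u +ᵥ x ∈ lineSet F x w :=
    lineSet_eq_of_inter_nonempty (hclique _ hT _ hS) ▸ mem_lineSet_self _ _
  have hrel := LinearIndependent.pair_iff.1 huv (t * (1 - μ) - 1) (t * μ) <| by
    rw [← sub_eq_zero.2 (vadd_right_cancel x ht).symm, hw_def]
    match_scalars <;> noncomm_ring
  obtain rfl : t = 0 := (mul_eq_zero.1 hrel.2).resolve_right hμ0
  simp at hrel

lemma exists_mem_of_isClique_transversals {A B C d : PLine F M X} (hAB : A ≠ B) (mAB : A ∼ B)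
    (mAC : A ∼ C) (mBC : B ∼ C) (hT : IsClique (transversals A B C))
    (hd : d ∈ transversals A B C) (hdABC : d ∉ ({A, B, C} : Set (PLine F M X))) :
    ∃ y : X, ∀ e ∈ transversals A B C, y ∈ e.1 := by
  obtain ⟨x, hxA, hxB⟩ := mAB
  by_cases hxC : x ∈ C.1
  · exact ⟨x, fun e he => mem_of_mem_transversals_of_concurrent hxA hxB hxC hT he⟩
  exfalso
  obtain ⟨y, hyA, hyC⟩ := mAC
  obtain ⟨z, hzB, hzC⟩ := mBC
  have hxy : x ≠ y := fun h => hxC (h ▸ hyC)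
  have hxz : x ≠ z := fun h => hxC (h ▸ hzC)
  have hyz : y ≠ z := fun h => hAB (eq_of_mem_of_mem hxA hyA hxB (h ▸ hzB) hxy)
  by_cases hF : ∀ μ : F, μ = 0 ∨ μ = 1
  · exact hdABC (transversals_subset_of_triangle hF hxA hxB hyA hyC hzB hzC hxy hxz hyz hd)
  push Not at hF
  obtain ⟨μ, hμ0, hμ1⟩ := hF
  obtain ⟨u, v, huv, hA, hB, hC⟩ :=
    exists_triangle_coords hAB hxA hxB hyA hyC hzB hzC hxy hxz hyz
  exact not_isClique_transversals_of_triangle huv hA hB hC hμ0 hμ1 hT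

end PLine

open PLine in
/-- For an isomorphism `φ` of affine Plücker spaces with `dim A' ≥ 3`, the image of any
star of lines is contained in a star of lines. -/
theorem stmt8 (hdim' : 3 ≤ Module.rank k' V')
    (φ : PLine k V P ≃ PLine k' V' P')
    (hiso : ∀ a b : PLine k V P, PMeets k V P a b ↔ PMeets k' V' P' (φ a) (φ b))
    (Q : P) :
    ∃ Q' : P', ∀ l : PLine k V P, Q ∈ l.1 → Q' ∈ (φ l).1 := by
  rcases lt_or_ge (Module.rank k V) 3 with h3 | h3
  · obtain ⟨l', m', n', hne, hlm, hln, hmn⟩ := exists_meets_not_meets (X := P') hdim'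
    obtain ⟨l, rfl⟩ := φ.surjective l'
    obtain ⟨m, rfl⟩ := φ.surjective m'
    obtain ⟨n, rfl⟩ := φ.surjective n'
    rw [← hiso] at hlm hln hmn
    exact (hne (congrArg φ (eq_of_meets_of_not_meets h3 hlm hln hmn))).elim
  obtain ⟨f, hf⟩ := exists_linearIndependent_of_le_rank h3
  set a := ofDir k Q (hf.ne_zero 0)
  set b := ofDir k Q (hf.ne_zero 1)
  set e := ofDir k Q (hf.ne_zero 2)
  have hstar : ∀ l, φ l ∈ transversals (φ a) (φ b) (φ e) ↔ Q ∈ l.1 := fun l => by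
    simp only [transversals, Set.mem_ofPred_eq, ← hiso]
    exact mem_transversals_ofDir_iff hf Q l
  have hclique : IsClique (transversals (φ a) (φ b) (φ e)) := by
    intro l' hl' m' hm'
    obtain ⟨l, rfl⟩ := φ.surjective l'
    obtain ⟨m, rfl⟩ := φ.surjective m'
    exact (hiso l m).1 ⟨Q, (hstar l).1 hl', (hstar m).1 hm'⟩
  have hQ (l) (hl : Q ∈ l.1) : φ l ∈ transversals (φ a) (φ b) (φ e) := (hstar l).2 hl
  obtain ⟨d, hQd, hd⟩ := exists_mem_notMem_ofDir hf Q
  have ha := hQ a (mem_lineSet_self Q _)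
  have hb := hQ b (mem_lineSet_self Q _)
  have he := hQ e (mem_lineSet_self Q _)
  obtain ⟨Y, hY⟩ := exists_mem_of_isClique_transversals
    (φ.injective.ne (ofDir_ne_ofDir_of_linearIndependent hf Q (by decide)))
    (hclique _ ha _ hb) (hclique _ ha _ he) (hclique _ hb _ he) hclique (hQ d hQd)
    (by simpa [φ.injective.eq_iff] using hd)
  exact ⟨Y, fun l hl => hY _ (hQ l hl)⟩
end

section
/- Let A, A' be affine spaces with dim A' ≥ 3 and let φ : L → L' be an isomorphism of the affine Plücker spaces (lines related iff they meet). Then the map κ sending the point a ∩ b (for adjacent lines a ≈ b) to the point a^φ ∩ b^φ is a well-defined bijection of the point sets that preserves collinearity and non-collinearity, i.e., a collineation. Hence every isomorphism of affine Plücker spaces with dim ≥ 3 target is induced by a collineation. -/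
variable (k V P : Type*) [DivisionRing k] [AddCommGroup V] [Module k V] [AddTorsor V P]

/-!
Call three distinct, pairwise meeting lines a star triple if any two of their transversals
meet and they have a fourth transversal; the notion uses only the meeting relation, so `φ`
preserves it. Three lines through a point `Q` with independent directions form a star triple
whose transversals are exactly the lines through `Q`. Conversely the transversals of any star
triple are the lines through one point: a triangle, or three concurrent coplanar lines, has
two disjoint parallel transversals as soon as `k` has an element other than `0` and `1`, and
over `𝔽₂` a line has only two points, which leaves a triangle without a fourth transversal.
Hence `φ` maps the lines through `Q` onto the lines through a point `κ Q`; `κ` is a bijection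
carrying lines onto lines. Three independent directions in `V` come from those in `V'` by
applying the same argument to `φ⁻¹`.
-/

section LinearAlgebra

variable {k V : Type*} [DivisionRing k] [AddCommGroup V] [Module k V]

lemma linearIndependent_triple_iff {u v w : V} :
    LinearIndependent k ![u, v, w] ↔
      LinearIndependent k ![v, w] ∧ u ∉ Submodule.span k {v, w} := by
  change LinearIndependent k (Fin.cons u ![v, w] : Fin 3 → V) ↔ _
  rw [linearIndependent_finCons, Matrix.range_cons_cons_empty]

lemma exists_linearIndependent_triple (h : 3 ≤ Module.rank k V) :
    ∃ u v w : V, LinearIndependent k ![u, v, w] := by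
  obtain ⟨g, hg⟩ := Module.le_rank_iff.1 (by exact_mod_cast h : ((3 : ℕ) : Cardinal) ≤ _)
  refine ⟨g 0, g 1, g 2, ?_⟩
  convert hg
  ext i
  fin_cases i <;> rfl

lemma LinearIndependent.eq_zero_of_triple {u v w : V} (hind : LinearIndependent k ![u, v, w])
    {a b c : k} (h : a • u + b • v + c • w = 0) : a = 0 ∧ b = 0 ∧ c = 0 := by
  have := Fintype.linearIndependent_iff.1 hind ![a, b, c] (by simpa [Fin.sum_univ_three] using h)
  exact ⟨this 0, this 1, this 2⟩

end LinearAlgebra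

namespace AffinePlucker

variable {k V P : Type*} [DivisionRing k] [AddCommGroup V] [Module k V] [AddTorsor V P]

variable (k) in
def line (p : P) (v : V) : Set P := {q | ∃ t : k, q = t • v +ᵥ p}

lemma smul_vadd_mem_line (p : P) (v : V) (t : k) : t • v +ᵥ p ∈ line k p v := ⟨t, rfl⟩

lemma mem_line_self (p : P) (v : V) : p ∈ line k p v := ⟨0, by simp⟩

lemma vadd_mem_line_iff {p : P} {v x : V} : x +ᵥ p ∈ line k p v ↔ ∃ t : k, t • v = x := by
  change (∃ t : k, x +ᵥ p = t • v +ᵥ p) ↔ _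
  simp only [vadd_right_cancel_iff, eq_comm]

lemma line_eq_of_mem {p q : P} {v : V} (h : q ∈ line k p v) : line k q v = line k p v := by
  obtain ⟨s, rfl⟩ := h
  ext x
  constructor
  · rintro ⟨t, rfl⟩
    exact ⟨t + s, by rw [vadd_vadd, add_smul]⟩
  · rintro ⟨t, rfl⟩
    exact ⟨t - s, by rw [vadd_vadd, ← add_smul, sub_add_cancel]⟩

lemma line_smul {c : k} (hc : c ≠ 0) (p : P) (v : V) : line k p (c • v) = line k p v := by
  ext x
  constructor
  · rintro ⟨t, rfl⟩
    exact ⟨t * c, by rw [mul_smul]⟩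
  · rintro ⟨t, rfl⟩
    exact ⟨t * c⁻¹, by rw [smul_smul, inv_mul_cancel_right₀ hc]⟩

lemma exists_vsub_eq_smul {p x y : P} {v : V} (hx : x ∈ line k p v) (hy : y ∈ line k p v) :
    ∃ t : k, y -ᵥ x = t • v := by
  obtain ⟨s, rfl⟩ := hx
  obtain ⟨t, rfl⟩ := hy
  exact ⟨t - s, by rw [vadd_vsub_vadd_cancel_right, sub_smul]⟩

lemma exists_smul_eq_of_inter_nonempty {p : P} {m x : V}
    (h : (line k p m ∩ line k (x +ᵥ p) m).Nonempty) : ∃ t : k, t • m = x := by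
  obtain ⟨q, ⟨s, rfl⟩, ⟨s', hs'⟩⟩ := h
  rw [vadd_vadd, vadd_right_cancel_iff] at hs'
  exact ⟨s - s', by rw [sub_smul, hs', add_sub_cancel_left]⟩

variable (k) in
def lineThrough (p : P) {v : V} (hv : v ≠ 0) : PLine k V P := ⟨line k p v, p, v, hv, rfl⟩

lemma exists_eq_line_of_mem (a : PLine k V P) {x : P} (hx : x ∈ a.1) :
    ∃ v : V, v ≠ 0 ∧ a.1 = line k x v := by
  obtain ⟨p, v, hv, ha⟩ := a.2
  rw [ha] at hx ⊢
  exact ⟨v, hv, (line_eq_of_mem hx).symm⟩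

lemma eq_line_vsub_of_mem {a : PLine k V P} {x y z : P} (hz : z ∈ a.1) (hx : x ∈ a.1)
    (hy : y ∈ a.1) (hxy : x ≠ y) : a.1 = line k z (y -ᵥ x) := by
  obtain ⟨v, -, ha⟩ := exists_eq_line_of_mem a hz
  rw [ha] at hx hy ⊢
  obtain ⟨t, ht⟩ := exists_vsub_eq_smul hx hy
  have ht0 : t ≠ 0 := by
    rintro rfl
    rw [zero_smul, vsub_eq_zero_iff_eq] at ht
    exact hxy ht.symm
  rw [ht, line_smul ht0]

lemma eq_of_mem_of_mem {a b : PLine k V P} {x y : P} (hxa : x ∈ a.1) (hya : y ∈ a.1)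
    (hxb : x ∈ b.1) (hyb : y ∈ b.1) (hxy : x ≠ y) : a = b :=
  Subtype.ext ((eq_line_vsub_of_mem hxa hxa hya hxy).trans
    (eq_line_vsub_of_mem hxb hxb hyb hxy).symm)

lemma linearIndependent_pair_of_ne {a b : PLine k V P} {Q : P} {u v : V} (hu : u ≠ 0)
    (hv : v ≠ 0) (ha : a.1 = line k Q u) (hb : b.1 = line k Q v) (hab : a ≠ b) :
    LinearIndependent k ![u, v] := by
  refine (LinearIndependent.pair_iff' hu).2 fun t htv => hab (Subtype.ext ?_)
  have ht : t ≠ 0 := by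
    rintro rfl
    exact hv (by rw [← htv, zero_smul])
  rw [ha, hb, ← htv, line_smul ht]

lemma exists_smul_eq_of_lineThrough_eq {Q : P} {u v : V} {hu : u ≠ 0} {hv : v ≠ 0}
    (h : lineThrough k Q hu = lineThrough k Q hv) : ∃ t : k, t • u = v := by
  have hmem : v +ᵥ Q ∈ line k Q v := vadd_mem_line_iff.2 ⟨1, one_smul k v⟩
  rw [← show line k Q u = line k Q v from congrArg Subtype.val h] at hmem
  exact vadd_mem_line_iff.1 hmem

lemma mem_of_meets_of_linearIndependent {d : PLine k V P} {Q : P} {u v w : V}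
    (hind : LinearIndependent k ![u, v, w]) (hu : (d.1 ∩ line k Q u).Nonempty)
    (hv : (d.1 ∩ line k Q v).Nonempty) (hw : (d.1 ∩ line k Q w).Nonempty) : Q ∈ d.1 := by
  by_contra hQ
  obtain ⟨_, hxd, t, rfl⟩ := hu
  obtain ⟨_, hyd, s, rfl⟩ := hv
  obtain ⟨_, hzd, r, rfl⟩ := hw
  have hyz : s • v +ᵥ Q ≠ r • w +ᵥ Q := by
    intro hyz
    rw [vadd_right_cancel_iff] at hyz
    have hs := (hind.eq_zero_of_triple (a := 0) (b := s) (c := -r) (by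
      rw [hyz, zero_smul, zero_add, neg_smul, add_neg_cancel])).2.1
    rw [hs, zero_smul, zero_vadd] at hyd
    exact hQ hyd
  have hd := eq_line_vsub_of_mem hyd hyd hzd hyz
  rw [hd] at hxd hyd
  obtain ⟨c, hc⟩ := exists_vsub_eq_smul hyd hxd
  simp only [vadd_vsub_vadd_cancel_right] at hc
  have ht := (hind.eq_zero_of_triple (a := t) (b := c * s - s) (c := -(c * r)) (by
    calc t • u + (c * s - s) • v + -(c * r) • w
        = t • u - s • v - c • (r • w - s • v) := by
          rw [sub_smul, neg_smul, mul_smul, mul_smul, smul_sub]; abel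
      _ = 0 := by rw [hc, sub_self])).1
  rw [ht, zero_smul, zero_vadd, ← hd] at hxd
  exact hQ hxd

lemma eq_or_eq_or_eq_of_mem (h2 : ∀ x : k, x = 0 ∨ x = 1) (l : PLine k V P) {x y z : P}
    (hx : x ∈ l.1) (hy : y ∈ l.1) (hz : z ∈ l.1) : x = y ∨ x = z ∨ y = z := by
  obtain ⟨p, v, -, hl⟩ := l.2
  rw [hl] at hx hy hz
  obtain ⟨a, rfl⟩ := hx
  obtain ⟨b, rfl⟩ := hy
  obtain ⟨c, rfl⟩ := hz
  rcases h2 a with rfl | rfl <;> rcases h2 b with rfl | rfl <;> rcases h2 c with rfl | rfl <;>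
    simp

lemma collinear_iff_exists_pline [Nontrivial V] {Q R S : P} :
    Collinear k ({Q, R, S} : Set P) ↔
      ∃ l : PLine k V P, Q ∈ l.1 ∧ R ∈ l.1 ∧ S ∈ l.1 := by
  simp only [collinear_iff_exists_forall_eq_smul_vadd, Set.mem_insert_iff,
    Set.mem_singleton_iff, forall_eq_or_imp, forall_eq]
  constructor
  · rintro ⟨p, v, hQ, hR, hS⟩
    by_cases hv : v = 0
    · obtain ⟨w, hw⟩ := exists_ne (0 : V)
      subst hv
      simp only [smul_zero, zero_vadd, exists_const] at hQ hR hS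
      exact ⟨lineThrough k p hw, hQ ▸ mem_line_self p w, hR ▸ mem_line_self p w,
        hS ▸ mem_line_self p w⟩
    · exact ⟨lineThrough k p hv, hQ, hR, hS⟩
  · rintro ⟨l, hQ, hR, hS⟩
    obtain ⟨p, v, -, hl⟩ := l.2
    rw [hl] at hQ hR hS
    exact ⟨p, v, hQ, hR, hS⟩

lemma eq_of_forall_mem_iff {u v : V} (huv : LinearIndependent k ![u, v]) {Q R : P}
    (h : ∀ l : PLine k V P, Q ∈ l.1 ↔ R ∈ l.1) : Q = R := by
  have hmem : ∀ {x : V} (hx : x ≠ 0), ∃ t : k, t • x = R -ᵥ Q := fun hx =>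
    vadd_mem_line_iff.1 (by
      rw [vsub_vadd]
      exact (h (lineThrough k Q hx)).1 (mem_line_self Q _))
  obtain ⟨s, hs⟩ := hmem (huv.ne_zero 0)
  obtain ⟨t, ht⟩ := hmem (huv.ne_zero 1)
  have hs0 := (LinearIndependent.pair_iff.1 huv s (-t) (by
    rw [neg_smul, ← sub_eq_add_neg, sub_eq_zero]; exact hs.trans ht.symm)).1
  rw [hs0, zero_smul, eq_comm, vsub_eq_zero_iff_eq] at hs
  exact hs.symm

end AffinePlucker

section StarTriple

variable {α β : Type*}

def IsTransversal (r : α → α → Prop) (a b c d : α) : Prop := r d a ∧ r d b ∧ r d c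

structure IsStarTriple (r : α → α → Prop) (a b c : α) : Prop where
  ne_ab : a ≠ b
  ne_ac : a ≠ c
  ne_bc : b ≠ c
  rel_ab : r a b
  rel_ac : r a c
  rel_bc : r b c
  rel_of_isTransversal : ∀ d e, IsTransversal r a b c d → IsTransversal r a b c e → r d e
  exists_isTransversal : ∃ d, IsTransversal r a b c d ∧ d ≠ a ∧ d ≠ b ∧ d ≠ c

variable {r : α → α → Prop} {s : β → β → Prop}

lemma RelIso.isTransversal_iff (f : r ≃r s) {a b c d : α} :
    IsTransversal s (f a) (f b) (f c) (f d) ↔ IsTransversal r a b c d := by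
  simp only [IsTransversal, f.map_rel_iff]

lemma IsStarTriple.map (f : r ≃r s) {a b c : α} (h : IsStarTriple r a b c) :
    IsStarTriple s (f a) (f b) (f c) where
  ne_ab := f.injective.ne h.ne_ab
  ne_ac := f.injective.ne h.ne_ac
  ne_bc := f.injective.ne h.ne_bc
  rel_ab := f.map_rel_iff.2 h.rel_ab
  rel_ac := f.map_rel_iff.2 h.rel_ac
  rel_bc := f.map_rel_iff.2 h.rel_bc
  rel_of_isTransversal d e hd he := by
    rw [← f.apply_symm_apply d, f.isTransversal_iff] at hd
    rw [← f.apply_symm_apply e, f.isTransversal_iff] at he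
    rw [← f.apply_symm_apply d, ← f.apply_symm_apply e, f.map_rel_iff]
    exact h.rel_of_isTransversal _ _ hd he
  exists_isTransversal := by
    obtain ⟨d, hd, hda, hdb, hdc⟩ := h.exists_isTransversal
    exact ⟨f d, f.isTransversal_iff.2 hd, f.injective.ne hda, f.injective.ne hdb,
      f.injective.ne hdc⟩

end StarTriple

namespace AffinePlucker

variable {k V P : Type*} [DivisionRing k] [AddCommGroup V] [Module k V] [AddTorsor V P]

lemma isTransversal_lineThrough_iff {u v w : V} (hind : LinearIndependent k ![u, v, w])
    (hu : u ≠ 0) (hv : v ≠ 0) (hw : w ≠ 0) (Q : P) (d : PLine k V P) :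
    IsTransversal (PMeets k V P) (lineThrough k Q hu) (lineThrough k Q hv)
      (lineThrough k Q hw) d ↔ Q ∈ d.1 :=
  ⟨fun ⟨ha, hb, hc⟩ => mem_of_meets_of_linearIndependent hind ha hb hc,
    fun hQ => ⟨⟨Q, hQ, mem_line_self Q u⟩, ⟨Q, hQ, mem_line_self Q v⟩,
      ⟨Q, hQ, mem_line_self Q w⟩⟩⟩

lemma isStarTriple_lineThrough {u v w : V} (hind : LinearIndependent k ![u, v, w])
    (hu : u ≠ 0) (hv : v ≠ 0) (hw : w ≠ 0) (Q : P) :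
    IsStarTriple (PMeets k V P) (lineThrough k Q hu) (lineThrough k Q hv)
      (lineThrough k Q hw) := by
  have hQ := isTransversal_lineThrough_iff hind hu hv hw Q
  have huv : u + v ≠ 0 := fun h =>
    one_ne_zero (hind.eq_zero_of_triple (a := 1) (b := 1) (c := 0) (by simpa using h)).1
  have hne : ∀ {x y : V} {hx : x ≠ 0} {hy : y ≠ 0},
      (∀ t : k, t • x ≠ y) → lineThrough k Q hx ≠ lineThrough k Q hy := fun h heq =>
    (exists_smul_eq_of_lineThrough_eq heq).elim h
  have hm1 : (-1 : k) ≠ 0 := neg_ne_zero.2 one_ne_zero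
  refine
    { ne_ab := hne fun t ht => hm1 (hind.eq_zero_of_triple (a := t) (b := -1) (c := 0)
        (by simp [ht])).2.1
      ne_ac := hne fun t ht => hm1 (hind.eq_zero_of_triple (a := t) (b := 0) (c := -1)
        (by simp [ht])).2.2
      ne_bc := hne fun t ht => hm1 (hind.eq_zero_of_triple (a := 0) (b := t) (c := -1)
        (by simp [ht])).2.2
      rel_ab := ⟨Q, mem_line_self Q u, mem_line_self Q v⟩
      rel_ac := ⟨Q, mem_line_self Q u, mem_line_self Q w⟩
      rel_bc := ⟨Q, mem_line_self Q v, mem_line_self Q w⟩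
      rel_of_isTransversal := fun d e hd he => ⟨Q, (hQ d).1 hd, (hQ e).1 he⟩
      exists_isTransversal := ⟨lineThrough k Q huv, (hQ _).2 (mem_line_self Q _), ?_, ?_, ?_⟩ }
  · refine (hne fun t ht => hm1
      (hind.eq_zero_of_triple (a := t - 1) (b := -1) (c := 0) ?_).2.1).symm
    simp [sub_smul, ht]
  · refine (hne fun t ht => hm1
      (hind.eq_zero_of_triple (a := -1) (b := t - 1) (c := 0) ?_).1).symm
    simp [sub_smul, ht]
  · refine (hne fun t ht => hm1
      (hind.eq_zero_of_triple (a := -1) (b := -1) (c := t) ?_).1).symm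
    simp only [ht, neg_one_smul]
    abel

lemma vadd_mem_of_meets_of_forall_eq_zero_or_eq_one (h2 : ∀ x : k, x = 0 ∨ x = 1)
    {d : PLine k V P} {Q : P} {u : V} (hQ : Q ∉ d.1) (h : (d.1 ∩ line k Q u).Nonempty) :
    u +ᵥ Q ∈ d.1 := by
  obtain ⟨_, hx, t, rfl⟩ := h
  rcases h2 t with rfl | rfl
  · rw [zero_smul, zero_vadd] at hx
    exact absurd hx hQ
  · rwa [one_smul] at hx

lemma mem_of_isTransversal_of_forall_eq_zero_or_eq_one (h2 : ∀ x : k, x = 0 ∨ x = 1)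
    {a b c d : PLine k V P} {Q : P} {u v : V} (huv : LinearIndependent k ![u, v])
    (ha : a.1 = line k Q u) (hb : b.1 = line k Q v) (hc : c.1 = line k Q (u + v))
    (hd : IsTransversal (PMeets k V P) a b c d) : Q ∈ d.1 := by
  by_contra hQ
  obtain ⟨hda, hdb, hdc⟩ := hd
  have hu := vadd_mem_of_meets_of_forall_eq_zero_or_eq_one h2 hQ (by rw [← ha]; exact hda)
  have hv := vadd_mem_of_meets_of_forall_eq_zero_or_eq_one h2 hQ (by rw [← hb]; exact hdb)
  have huv' := vadd_mem_of_meets_of_forall_eq_zero_or_eq_one h2 hQ (by rw [← hc]; exact hdc)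
  rcases eq_or_eq_or_eq_of_mem h2 d hu hv huv' with h | h | h <;>
    rw [vadd_right_cancel_iff] at h
  · exact huv.injective.ne (by decide : (0 : Fin 2) ≠ 1) h
  · exact huv.ne_zero 1 (by simpa using h)
  · exact huv.ne_zero 0 (by simpa using h)

/-- Covers a triangle (`γ = 1`) as well as three concurrent lines (`γ = 0`): for `δ = 0, 1` the
lines through `δ • u +ᵥ R` with direction `u + μ • v` are disjoint transversals. -/
lemma not_isStarTriple_of_coplanar {a b c : PLine k V P} {R : P} {u v : V} {γ μ : k}
    (huv : LinearIndependent k ![u, v]) (hμ0 : μ ≠ 0) (hμ1 : μ ≠ 1)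
    (ha : a.1 = line k R u) (hb : b.1 = line k R v) (hc : c.1 = line k (γ • u +ᵥ R) (u + v)) :
    ¬ IsStarTriple (PMeets k V P) a b c := by
  intro h
  set m := u + μ • v with hm_def
  have hm : m ≠ 0 := fun hm =>
    hμ0 (LinearIndependent.pair_iff.1 huv 1 μ (by rw [one_smul]; exact hm)).2
  have hT (δ : k) : IsTransversal (PMeets k V P) a b c (lineThrough k (δ • u +ᵥ R) hm) := by
    refine ⟨⟨δ • u +ᵥ R, mem_line_self _ _, ha ▸ smul_vadd_mem_line R u δ⟩,
      ⟨(-δ) • m +ᵥ (δ • u +ᵥ R), smul_vadd_mem_line _ _ _, ?_⟩, ?_⟩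
    · rw [hb, vadd_vadd]
      refine ⟨-δ * μ, ?_⟩
      rw [hm_def, smul_add, neg_smul, neg_smul, mul_smul, neg_smul]
      abel_nf
    · set s := (γ - δ) * (1 - μ)⁻¹
      have hs : γ = s - s * μ + δ := by
        rw [← mul_one_sub, inv_mul_cancel_right₀ (sub_ne_zero.2 hμ1.symm), sub_add_cancel]
      refine ⟨s • m +ᵥ (δ • u +ᵥ R), smul_vadd_mem_line _ _ _, ?_⟩
      rw [hc]
      refine ⟨s * μ, ?_⟩
      rw [vadd_vadd, vadd_vadd, hs, hm_def]
      congr 1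
      simp only [smul_add, add_smul, sub_smul, smul_smul]
      abel
  have hmeet := h.rel_of_isTransversal _ _ (hT 0) (hT 1)
  change (line k (0 • u +ᵥ R) m ∩ line k (1 • u +ᵥ R) m).Nonempty at hmeet
  rw [zero_smul, zero_vadd, one_smul] at hmeet
  obtain ⟨t, ht⟩ := exists_smul_eq_of_inter_nonempty hmeet
  obtain ⟨ht1, htμ⟩ := LinearIndependent.pair_iff.1 huv (t - 1) (t * μ) (by
    rw [← sub_eq_zero.2 ht, hm_def, smul_add, sub_smul, one_smul, mul_smul]; abel)
  rw [sub_eq_zero.1 ht1, one_mul] at htμ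
  exact hμ0 htμ

end AffinePlucker

open AffinePlucker

namespace IsStarTriple

variable {k V P : Type*} [DivisionRing k] [AddCommGroup V] [Module k V] [AddTorsor V P]
  {a b c : PLine k V P}

lemma exists_mem_inter (h : IsStarTriple (PMeets k V P) a b c) :
    ∃ Q, Q ∈ a.1 ∧ Q ∈ b.1 ∧ Q ∈ c.1 := by
  by_contra hconc
  obtain ⟨R, hRa, hRb⟩ := h.rel_ab
  obtain ⟨T, hTa, hTc⟩ := h.rel_ac
  obtain ⟨S, hSb, hSc⟩ := h.rel_bc
  have hRT : R ≠ T := by rintro rfl; exact hconc ⟨R, hRa, hRb, hTc⟩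
  have hRS : R ≠ S := by rintro rfl; exact hconc ⟨R, hRa, hRb, hSc⟩
  have hST : S ≠ T := by rintro rfl; exact hconc ⟨S, hTa, hSb, hSc⟩
  by_cases h2 : ∀ x : k, x = 0 ∨ x = 1
  · -- Lines have two points, so the fourth transversal passes through two of `R`, `S`, `T`.
    obtain ⟨d, ⟨⟨x, hxd, hxa⟩, ⟨y, hyd, hyb⟩, ⟨z, hzd, hzc⟩⟩, hda, hdb, hdc⟩ :=
      h.exists_isTransversal
    have hx := (eq_or_eq_or_eq_of_mem h2 a hxa hRa hTa).imp_right (·.resolve_right hRT)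
    have hy := (eq_or_eq_or_eq_of_mem h2 b hyb hRb hSb).imp_right (·.resolve_right hRS)
    have hz := (eq_or_eq_or_eq_of_mem h2 c hzc hSc hTc).imp_right (·.resolve_right hST)
    rcases hx with rfl | rfl
    · rcases hz with rfl | rfl
      · exact hdb (eq_of_mem_of_mem hxd hzd hRb hSb hRS)
      · exact hda (eq_of_mem_of_mem hxd hzd hRa hTa hRT)
    · rcases hy with rfl | rfl
      · exact hda (eq_of_mem_of_mem hyd hxd hRa hTa hRT)
      · exact hdc (eq_of_mem_of_mem hyd hxd hSc hTc hST)
  · push Not at h2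
    obtain ⟨μ, hμ0, hμ1⟩ := h2
    have ha : a.1 = line k R (T -ᵥ R) := eq_line_vsub_of_mem hRa hRa hTa hRT
    have hb : b.1 = line k R (R -ᵥ S) := eq_line_vsub_of_mem hRb hSb hRb hRS.symm
    have hc : c.1 = line k ((1 : k) • (T -ᵥ R) +ᵥ R) ((T -ᵥ R) + (R -ᵥ S)) := by
      rw [one_smul, vsub_vadd, vsub_add_vsub_cancel]
      exact eq_line_vsub_of_mem hTc hSc hTc hST
    have huv : LinearIndependent k ![T -ᵥ R, R -ᵥ S] := by
      refine (LinearIndependent.pair_iff' (vsub_ne_zero.2 hRT.symm)).2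
        fun t ht => hconc ⟨S, ?_, hSb, hSc⟩
      rw [ha, ← vsub_vadd S R]
      exact vadd_mem_line_iff.2 ⟨-t, by rw [neg_smul, ht, neg_vsub_eq_vsub_rev]⟩
    exact not_isStarTriple_of_coplanar huv hμ0 hμ1 ha hb hc h

lemma mem_of_isTransversal_and_exists_linearIndependent
    (h : IsStarTriple (PMeets k V P) a b c) {Q : P} (hQa : Q ∈ a.1) (hQb : Q ∈ b.1)
    (hQc : Q ∈ c.1) :
    (∀ d, IsTransversal (PMeets k V P) a b c d → Q ∈ d.1) ∧
      ∃ u v w : V, LinearIndependent k ![u, v, w] := by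
  obtain ⟨u, hu, ha⟩ := exists_eq_line_of_mem a hQa
  obtain ⟨v, hv, hb⟩ := exists_eq_line_of_mem b hQb
  obtain ⟨w, hw, hc⟩ := exists_eq_line_of_mem c hQc
  by_cases hwuv : w ∉ Submodule.span k {u, v}
  · have hind : LinearIndependent k ![w, u, v] :=
      linearIndependent_triple_iff.2 ⟨linearIndependent_pair_of_ne hu hv ha hb h.ne_ab, hwuv⟩
    exact ⟨fun d ⟨hda, hdb, hdc⟩ => mem_of_meets_of_linearIndependent hind
      (hc ▸ hdc) (ha ▸ hda) (hb ▸ hdb), _, _, _, hind⟩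
  obtain ⟨β, γ, hβγ⟩ := Submodule.mem_span_pair.1 (not_not.1 hwuv)
  have hβ : β ≠ 0 := by
    rintro rfl
    rw [zero_smul, zero_add] at hβγ
    have hγ : γ ≠ 0 := by rintro rfl; exact hw (by rw [← hβγ, zero_smul])
    exact h.ne_bc (Subtype.ext (by rw [hb, hc, ← hβγ, line_smul hγ]))
  have hγ : γ ≠ 0 := by
    rintro rfl
    rw [zero_smul, add_zero] at hβγ
    exact h.ne_ac (Subtype.ext (by rw [ha, hc, ← hβγ, line_smul hβ]))
  have ha' : a.1 = line k Q (β • u) := by rw [ha, line_smul hβ]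
  have hb' : b.1 = line k Q (γ • v) := by rw [hb, line_smul hγ]
  have hc' : c.1 = line k Q (β • u + γ • v) := by rw [hc, hβγ]
  have huv := linearIndependent_pair_of_ne (smul_ne_zero hβ hu) (smul_ne_zero hγ hv) ha' hb'
    h.ne_ab
  by_cases h2 : ∀ x : k, x = 0 ∨ x = 1
  · have hmem d (hd : IsTransversal (PMeets k V P) a b c d) : Q ∈ d.1 :=
      mem_of_isTransversal_of_forall_eq_zero_or_eq_one h2 huv ha' hb' hc' hd
    obtain ⟨d, hd, hda, hdb, hdc⟩ := h.exists_isTransversal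
    obtain ⟨m, hm, hdm⟩ := exists_eq_line_of_mem d (hmem d hd)
    refine ⟨hmem, m, β • u, γ • v,
      linearIndependent_triple_iff.2 ⟨huv, fun hm' => ?_⟩⟩
    obtain ⟨x, y, hxy⟩ := Submodule.mem_span_pair.1 hm'
    rcases h2 x with rfl | rfl <;> rcases h2 y with rfl | rfl <;>
      simp only [zero_smul, one_smul, zero_add, add_zero] at hxy
    · exact hm hxy.symm
    · exact hdb (Subtype.ext (by rw [hdm, hb', hxy]))
    · exact hda (Subtype.ext (by rw [hdm, ha', hxy]))
    · exact hdc (Subtype.ext (by rw [hdm, hc', hxy]))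
  · push Not at h2
    obtain ⟨μ, hμ0, hμ1⟩ := h2
    rw [← zero_vadd V Q, ← zero_smul k (β • u)] at hc'
    exact absurd h (not_isStarTriple_of_coplanar huv hμ0 hμ1 ha' hb' hc')

lemma exists_forall_isTransversal_iff (h : IsStarTriple (PMeets k V P) a b c) :
    ∃ Q : P, ∀ d, IsTransversal (PMeets k V P) a b c d ↔ Q ∈ d.1 := by
  obtain ⟨Q, hQa, hQb, hQc⟩ := h.exists_mem_inter
  exact ⟨Q, fun d => ⟨(h.mem_of_isTransversal_and_exists_linearIndependent hQa hQb hQc).1 d,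
    fun hQd => ⟨⟨Q, hQd, hQa⟩, ⟨Q, hQd, hQb⟩, ⟨Q, hQd, hQc⟩⟩⟩⟩

lemma exists_linearIndependent (h : IsStarTriple (PMeets k V P) a b c) :
    ∃ u v w : V, LinearIndependent k ![u, v, w] := by
  obtain ⟨Q, hQa, hQb, hQc⟩ := h.exists_mem_inter
  exact (h.mem_of_isTransversal_and_exists_linearIndependent hQa hQb hQc).2

end IsStarTriple

namespace AffinePlucker

variable {k V P : Type*} [DivisionRing k] [AddCommGroup V] [Module k V] [AddTorsor V P]
  {k' V' P' : Type*} [DivisionRing k'] [AddCommGroup V'] [Module k' V'] [AddTorsor V' P']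

lemma exists_linearIndependent_of_relIso (f : PMeets k V P ≃r PMeets k' V' P') {u v w : V}
    (hind : LinearIndependent k ![u, v, w]) :
    ∃ u' v' w' : V', LinearIndependent k' ![u', v', w'] := by
  obtain ⟨hu, hv, hw⟩ : u ≠ 0 ∧ v ≠ 0 ∧ w ≠ 0 :=
    ⟨hind.ne_zero 0, hind.ne_zero 1, hind.ne_zero 2⟩
  exact ((isStarTriple_lineThrough hind hu hv hw (Classical.arbitrary P)).map f)
    |>.exists_linearIndependent

lemma exists_forall_mem_iff_of_relIso (f : PMeets k V P ≃r PMeets k' V' P') {u v w : V}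
    (hind : LinearIndependent k ![u, v, w]) (Q : P) :
    ∃ Q' : P', ∀ l, Q' ∈ (f l).1 ↔ Q ∈ l.1 := by
  obtain ⟨hu, hv, hw⟩ : u ≠ 0 ∧ v ≠ 0 ∧ w ≠ 0 :=
    ⟨hind.ne_zero 0, hind.ne_zero 1, hind.ne_zero 2⟩
  obtain ⟨Q', hQ'⟩ :=
    ((isStarTriple_lineThrough hind hu hv hw Q).map f).exists_forall_isTransversal_iff
  exact ⟨Q', fun l => by rw [← hQ', f.isTransversal_iff, isTransversal_lineThrough_iff hind]⟩

lemma exists_equiv_forall_mem_iff (f : PMeets k V P ≃r PMeets k' V' P') {u v w : V}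
    (hind : LinearIndependent k ![u, v, w]) {u' v' w' : V'}
    (hind' : LinearIndependent k' ![u', v', w']) :
    ∃ κ : P ≃ P', ∀ Q l, κ Q ∈ (f l).1 ↔ Q ∈ l.1 := by
  choose κ hκ using exists_forall_mem_iff_of_relIso f hind
  choose κ' hκ' using exists_forall_mem_iff_of_relIso f.symm hind'
  refine ⟨⟨κ, κ', fun Q => ?_, fun Q' => ?_⟩, hκ⟩
  · refine eq_of_forall_mem_iff (linearIndependent_triple_iff.1 hind).1 fun l => ?_
    simpa using (hκ' (κ Q) (f l)).trans (hκ Q l)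
  · refine eq_of_forall_mem_iff (linearIndependent_triple_iff.1 hind').1 fun l' => ?_
    simpa using (hκ (κ' Q') (f.symm l')).trans (hκ' Q' l')

end AffinePlucker

variable (k' V' P' : Type*) [DivisionRing k'] [AddCommGroup V'] [Module k' V'] [AddTorsor V' P']

/-- Every isomorphism `φ` of affine Plücker spaces with `dim A' ≥ 3` is induced by a
collineation `κ`, which maps the intersection point of two adjacent lines `a, b` to the
intersection point of `φ a` and `φ b`. -/
theorem stmt9 (hdim' : 3 ≤ Module.rank k' V')
    (φ : PLine k V P ≃ PLine k' V' P')
    (hiso : ∀ a b : PLine k V P, PMeets k V P a b ↔ PMeets k' V' P' (φ a) (φ b)) :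
    ∃ κ : P ≃ P',
      (∀ a b : PLine k V P, a ≠ b → ∀ Q : P, Q ∈ a.1 ∩ b.1 →
        κ Q ∈ (φ a).1 ∩ (φ b).1) ∧
      (∀ Q R S : P,
        Collinear k ({Q, R, S} : Set P) ↔ Collinear k' ({κ Q, κ R, κ S} : Set P')) := by
  let f : PMeets k V P ≃r PMeets k' V' P' := ⟨φ, (hiso _ _).symm⟩
  obtain ⟨u', v', w', hind'⟩ := exists_linearIndependent_triple hdim'
  obtain ⟨u, v, w, hind⟩ := exists_linearIndependent_of_relIso f.symm hind'
  obtain ⟨κ, hκ⟩ := exists_equiv_forall_mem_iff f hind hind'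
  have : Nontrivial V := ⟨⟨u, 0, hind.ne_zero 0⟩⟩
  have : Nontrivial V' := ⟨⟨u', 0, hind'.ne_zero 0⟩⟩
  refine ⟨κ, fun a b _ Q hQ => ⟨(hκ Q a).2 hQ.1, (hκ Q b).2 hQ.2⟩, fun Q R S => ?_⟩
  rw [collinear_iff_exists_pline (V := V), collinear_iff_exists_pline (V := V'),
    f.surjective.exists]
  simp only [hκ]
end

section
/- In an affine space of dimension ≥ 2, three mutually distinct points Q, R, S are collinear if and only if the stars of lines L(Q), L(R), L(S) have exactly one common line. -/
/-!
A line `{t • v +ᵥ p}` is the affine span of any two distinct points on it. Hence, when `Q ≠ R`,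
any line through `Q` and `R` is `line[k, Q, R]`, and `Q, R, S` are collinear exactly when
`S ∈ line[k, Q, R]`, i.e. when this unique line through `Q` and `R` also passes through `S`.
-/

variable (k V P : Type*) [DivisionRing k] [AddCommGroup V] [Module k V] [AddTorsor V P]

section

variable {k V P}

theorem setOf_smul_vadd_eq_affineSpan_pair (p : P) (v : V) :
    {q | ∃ t : k, q = t • v +ᵥ p} = (line[k, p, v +ᵥ p] : Set P) := by
  ext q
  rw [Set.mem_ofPred_eq, SetLike.mem_coe, ← vsub_vadd q p, vadd_left_mem_affineSpan_pair,
    vadd_vsub]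
  simp only [vadd_right_cancel_iff, eq_comm]

theorem isPLine_iff {s : Set P} :
    IsPLine k V P s ↔ ∃ p₁ p₂ : P, p₁ ≠ p₂ ∧ s = line[k, p₁, p₂] := by
  constructor
  · rintro ⟨p, v, hv, rfl⟩
    exact ⟨p, v +ᵥ p, fun h => hv (by simpa using congrArg (· -ᵥ p) h.symm),
      setOf_smul_vadd_eq_affineSpan_pair p v⟩
  · rintro ⟨p₁, p₂, hp, rfl⟩
    refine ⟨p₁, p₂ -ᵥ p₁, vsub_ne_zero.2 hp.symm, ?_⟩
    rw [setOf_smul_vadd_eq_affineSpan_pair, vsub_vadd]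

theorem IsPLine.eq_affineSpan_pair {s : Set P} (hs : IsPLine k V P s) {Q R : P}
    (hQ : Q ∈ s) (hR : R ∈ s) (hQR : Q ≠ R) : s = line[k, Q, R] := by
  obtain ⟨p₁, p₂, -, rfl⟩ := isPLine_iff.1 hs
  rw [affineSpan_pair_eq_of_mem_of_mem_of_ne hQ hR hQR]

end

theorem stmt11 (Q R S : P)
    (hQR : Q ≠ R) :
    Collinear k ({Q, R, S} : Set P) ↔
      ∃! l : PLine k V P, Q ∈ l.1 ∧ R ∈ l.1 ∧ S ∈ l.1 := by
  constructor
  · intro hcol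
    have hS : S ∈ line[k, Q, R] :=
      hcol.mem_affineSpan_of_mem_of_ne (by simp) (by simp) (by simp) hQR
    refine ⟨⟨line[k, Q, R], isPLine_iff.2 ⟨Q, R, hQR, rfl⟩⟩,
      ⟨left_mem_affineSpan_pair k Q R, right_mem_affineSpan_pair k Q R, hS⟩, ?_⟩
    rintro ⟨m, hm⟩ ⟨hQm, hRm, -⟩
    exact Subtype.ext (hm.eq_affineSpan_pair hQm hRm hQR)
  · rintro ⟨⟨l, hl⟩, ⟨hQ, hR, hS⟩, -⟩
    obtain ⟨p₁, p₂, -, rfl⟩ := isPLine_iff.1 hl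
    exact collinear_triple_of_mem_affineSpan_pair hQ hR hS
end

section
/- Let A, A' be affine spaces, dim A' ≥ 3, and φ : L → L' a bijection with a ∼ b ⟹ φ(a) ∼' φ(b). Then dim A ≥ 3. -/
/-!
Suppose `dim A ≤ 2`. In `A'` any two meeting lines have a common disjoint line, and `φ⁻¹` takes
disjoint lines to disjoint lines. Pulling back two disjoint lines of `A'` shows that `A` has two
non-parallel directions, hence two non-parallel lines `a, b` through a point. Pulling back a line
of `A'` disjoint from `φ a` and `φ b` gives a line of `A` disjoint from both. But in dimension
at most 2 disjoint lines are parallel, so `a ∥ b`, a contradiction.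
-/

variable (k V P : Type*) [DivisionRing k] [AddCommGroup V] [Module k V] [AddTorsor V P]

variable (k' V' P' : Type*) [DivisionRing k'] [AddCommGroup V'] [Module k' V'] [AddTorsor V' P']

open Submodule

section

variable {K W Q : Type*} [DivisionRing K] [AddCommGroup W] [Module K W]

theorem exists_not_mem_span_pair (h : 3 ≤ Module.rank K W) (u v : W) :
    ∃ w : W, w ∉ span K {u, v} := by
  classical
  by_contra! hspan
  have hle := rank_span_finset_le (R := K) ({u, v} : Finset W)
  rw [Finset.coe_pair, eq_top_iff'.2 hspan, rank_top] at hle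
  have h2 : (({u, v} : Finset W).card : Cardinal) ≤ 2 := by exact_mod_cast Finset.card_le_two
  exact absurd (h.trans (hle.trans h2)) (by norm_num)

theorem span_pair_eq_top (h : Module.rank K W < 3) {u w : W} (hu : u ≠ 0)
    (hw : w ∉ span K {u}) : span K {u, w} = ⊤ := by
  by_contra hne
  obtain ⟨e, -, he⟩ := SetLike.exists_of_lt (lt_top_iff_ne_top.2 hne)
  have huw : LinearIndependent K ![u, w] := (LinearIndependent.pair_iff' hu).2
    fun a ha => hw (ha ▸ smul_mem _ _ (mem_span_singleton_self u))
  have heuw : LinearIndependent K (Fin.cons e ![u, w]) :=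
    linearIndependent_finCons.2 ⟨huw, by simpa [Set.pair_comm] using he⟩
  exact h.not_ge (by simpa using heuw.cardinal_lift_le_rank)

variable [AddTorsor W Q]

def lineThrough (p : Q) (u : W) (hu : u ≠ 0) : PLine K W Q :=
  ⟨{q | ∃ t : K, q = t • u +ᵥ p}, p, u, hu, rfl⟩

theorem exists_eq_lineThrough (a : PLine K W Q) :
    ∃ (p : Q) (u : W) (hu : u ≠ 0), a = lineThrough p u hu := by
  obtain ⟨p, u, hu, ha⟩ := a.2
  exact ⟨p, u, hu, Subtype.ext ha⟩

theorem pMeets_refl_s14 (a : PLine K W Q) : PMeets K W Q a a := by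
  obtain ⟨p, u, hu, rfl⟩ := exists_eq_lineThrough a
  exact ⟨p, ⟨0, by simp⟩, ⟨0, by simp⟩⟩

theorem pMeets_lineThrough_iff {p r : Q} {u w : W} {hu : u ≠ 0} {hw : w ≠ 0} :
    PMeets K W Q (lineThrough p u hu) (lineThrough r w hw) ↔ r -ᵥ p ∈ span K {u, w} := by
  rw [mem_span_pair]
  constructor
  · rintro ⟨x, ⟨s, rfl⟩, ⟨t, ht⟩⟩
    refine ⟨s, -t, ?_⟩
    rw [← vsub_sub_vsub_cancel_left r p (s • u +ᵥ p), vadd_vsub, ht, vadd_vsub, neg_smul,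
      sub_eq_add_neg]
  · rintro ⟨s, t, hst⟩
    refine ⟨s • u +ᵥ p, ⟨s, rfl⟩, ⟨-t, ?_⟩⟩
    rw [← vsub_vadd r p, ← hst, vadd_vadd, neg_smul, neg_add_cancel_comm_assoc]

/-- The parallel to `a` through a point off the plane spanned by `a` and `b` misses both. -/
theorem exists_not_pMeets_of_pMeets (h : 3 ≤ Module.rank K W) {a b : PLine K W Q}
    (hab : PMeets K W Q a b) : ∃ c, ¬ PMeets K W Q a c ∧ ¬ PMeets K W Q b c := by
  obtain ⟨p, u, hu, rfl⟩ := exists_eq_lineThrough a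
  obtain ⟨q, v, hv, rfl⟩ := exists_eq_lineThrough b
  rw [pMeets_lineThrough_iff] at hab
  obtain ⟨w, hw⟩ := exists_not_mem_span_pair h u v
  refine ⟨lineThrough (w +ᵥ p) u hu, ?_, ?_⟩ <;> rw [pMeets_lineThrough_iff]
  · rw [vadd_vsub]
    exact fun hw' => hw (span_mono (by simp) hw')
  · rw [vadd_vsub_assoc]
    intro hmem
    refine hw ?_
    simpa [add_assoc, Set.pair_comm] using add_mem (span_mono (Set.pair_comm v u).le hmem) hab

theorem exists_not_mem_span_singleton_of_not_pMeets {a c : PLine K W Q}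
    (hac : ¬ PMeets K W Q a c) : ∃ u v : W, u ≠ 0 ∧ v ∉ span K {u} := by
  obtain ⟨p, u, hu, rfl⟩ := exists_eq_lineThrough a
  obtain ⟨r, w, hw, rfl⟩ := exists_eq_lineThrough c
  have hv : r -ᵥ p ∉ span K {u} := fun h =>
    hac (pMeets_lineThrough_iff.2 (span_mono (by simp) h))
  exact ⟨u, r -ᵥ p, hu, hv⟩

theorem mem_span_of_not_pMeets (h : Module.rank K W < 3) {p r : Q} {u w : W} {hu : u ≠ 0}
    {hw : w ≠ 0} (hur : ¬ PMeets K W Q (lineThrough p u hu) (lineThrough r w hw)) :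
    w ∈ span K {u} := by
  by_contra hwu
  exact hur (pMeets_lineThrough_iff.2 (span_pair_eq_top h hu hwu ▸ mem_top))

theorem mem_span_of_not_pMeets_of_not_pMeets (h : Module.rank K W < 3) {p : Q} {u v : W}
    {hu : u ≠ 0} {hv : v ≠ 0} {c : PLine K W Q}
    (huc : ¬ PMeets K W Q (lineThrough p u hu) c) (hvc : ¬ PMeets K W Q (lineThrough p v hv) c) :
    v ∈ span K {u} := by
  obtain ⟨r, w, hw, rfl⟩ := exists_eq_lineThrough c
  have hvw : v ∈ span K {w} := by
    simpa using mem_span_insert_exchange (s := ∅) (x := w) (y := v)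
      (by simpa using mem_span_of_not_pMeets h hvc) (by simpa using hw)
  exact span_le.2 (by simpa using mem_span_of_not_pMeets h huc) hvw

end

/-- If there is a bijection of line sets taking meeting lines to meeting lines and
`dim A' ≥ 3`, then `dim A ≥ 3`. -/
theorem stmt14 (hdim' : 3 ≤ Module.rank k' V')
    (φ : PLine k V P ≃ PLine k' V' P')
    (hmono : ∀ a b : PLine k V P, PMeets k V P a b → PMeets k' V' P' (φ a) (φ b)) :
    3 ≤ Module.rank k V := by
  by_contra! hlt
  have hpull : ∀ a' c', ¬ PMeets k' V' P' a' c' → ¬ PMeets k V P (φ.symm a') (φ.symm c') :=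
    fun a' c' h hm => h (by simpa using hmono _ _ hm)
  obtain ⟨p'⟩ : Nonempty P' := AddTorsor.nonempty
  obtain ⟨u', hu'⟩ := rank_pos_iff_exists_ne_zero.1 (lt_of_lt_of_le (by norm_num) hdim')
  obtain ⟨c', hac', -⟩ :=
    exists_not_pMeets_of_pMeets hdim' (pMeets_refl_s14 (lineThrough p' u' hu'))
  obtain ⟨u, v, hu, hvu⟩ := exists_not_mem_span_singleton_of_not_pMeets (hpull _ _ hac')
  have hv : v ≠ 0 := fun h0 => hvu (h0 ▸ zero_mem _)
  obtain ⟨p⟩ : Nonempty P := AddTorsor.nonempty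
  have hab : PMeets k V P (lineThrough p u hu) (lineThrough p v hv) :=
    pMeets_lineThrough_iff.2 (by simp [zero_mem])
  obtain ⟨d', had', hbd'⟩ := exists_not_pMeets_of_pMeets hdim' (hmono _ _ hab)
  exact hvu (mem_span_of_not_pMeets_of_not_pMeets hlt
    (by simpa using hpull _ _ had') (by simpa using hpull _ _ hbd'))
end

section
/- Plücker spaces on affine planes A and A' (lines related iff they meet) are isomorphic if and only if A and A' have equipotent pencils of parallel lines, i.e., the orders of A and A' are equal. -/
variable (k V P : Type*) [DivisionRing k] [AddCommGroup V] [Module k V] [AddTorsor V P]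

/-!
In affine coordinates a line of a plane over `k` is given by a slope in `k ∪ {∞}` and an
intercept in `k`, and two lines meet iff their slopes differ or they coincide. Hence parallelism
("equal or disjoint") is expressible through meeting, so an isomorphism of Plücker spaces maps
pencils of parallel lines bijectively onto pencils; as each pencil has `|k|` lines, this gives
`k ≃ k'`. Conversely a bijection `k ≃ k'`, applied to slopes and intercepts, preserves meeting.
-/

section SlopeIntercept
variable {α β : Type*}

/-- The meeting relation of lines encoded by their slope (`none` for vertical lines) and
intercept. -/
def SlopeMeets (u v : Option α × α) : Prop := u.1 ≠ v.1 ∨ u.2 = v.2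

lemma fst_eq_iff_eq_or_not_slopeMeets (u v : Option α × α) :
    u.1 = v.1 ↔ u = v ∨ ¬SlopeMeets u v := by
  rw [SlopeMeets, Prod.ext_iff]
  tauto

lemma RelIso.slopeMeets_fst_eq_iff (ψ : SlopeMeets (α := α) ≃r SlopeMeets (α := β))
    (u v : Option α × α) : (ψ u).1 = (ψ v).1 ↔ u.1 = v.1 := by
  rw [fst_eq_iff_eq_or_not_slopeMeets, fst_eq_iff_eq_or_not_slopeMeets, ψ.injective.eq_iff,
    ψ.map_rel_iff]

def Equiv.prodFstFiber (a : α) : {u : α × β // u.1 = a} ≃ β where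
  toFun u := u.1.2
  invFun b := ⟨(a, b), rfl⟩
  left_inv := by rintro ⟨⟨_, _⟩, rfl⟩; rfl
  right_inv _ := rfl

theorem nonempty_slopeMeets_relIso_iff :
    Nonempty (SlopeMeets (α := α) ≃r SlopeMeets (α := β)) ↔ Nonempty (α ≃ β) := by
  constructor
  · rintro ⟨ψ⟩
    rcases isEmpty_or_nonempty α with hα | ⟨⟨a₀⟩⟩
    · have : IsEmpty β := ⟨fun b => isEmptyElim (ψ.symm (none, b))⟩
      exact ⟨Equiv.equivOfIsEmpty α β⟩
    have hpencil : ∀ u : Option α × α, u.1 = none ↔ (ψ u).1 = (ψ (none, a₀)).1 := fun u =>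
      (ψ.slopeMeets_fst_eq_iff u (none, a₀)).symm
    exact ⟨(Equiv.prodFstFiber none).symm.trans
      ((ψ.toEquiv.subtypeEquiv hpencil).trans (Equiv.prodFstFiber _))⟩
  · rintro ⟨e⟩
    refine ⟨⟨e.optionCongr.prodCongr e, fun {u v} => ?_⟩⟩
    simp [SlopeMeets, (Option.map_injective e.injective).eq_iff]

end SlopeIntercept

section AffineInvariance
variable {k V₁ P₁ V₂ P₂ : Type*} [DivisionRing k]
  [AddCommGroup V₁] [Module k V₁] [AddTorsor V₁ P₁]
  [AddCommGroup V₂] [Module k V₂] [AddTorsor V₂ P₂]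

lemma AffineEquiv.isPLine_image {s : Set P₁} (e : P₁ ≃ᵃ[k] P₂)
    (hs : IsPLine k V₁ P₁ s) : IsPLine k V₂ P₂ (e '' s) := by
  obtain ⟨p, v, hv, rfl⟩ := hs
  refine ⟨e p, e.linear v, by simpa using hv, ?_⟩
  ext q
  simp [eq_comm (a := q), AffineEquiv.map_vadd]

def AffineEquiv.plineRelIso (e : P₁ ≃ᵃ[k] P₂) :
    PMeets k V₁ P₁ ≃r PMeets k V₂ P₂ where
  toFun a := ⟨e '' a.1, e.isPLine_image a.2⟩
  invFun a := ⟨e.symm '' a.1, e.symm.isPLine_image a.2⟩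
  left_inv a := Subtype.ext (e.toEquiv.symm_image_image a.1)
  right_inv a := Subtype.ext (e.toEquiv.image_symm_image a.1)
  map_rel_iff' {a b} := by
    simp only [Equiv.coe_fn_mk, PMeets, ← Set.image_inter e.injective, Set.image_nonempty]

end AffineInvariance

section Coordinates
variable {k : Type*} [DivisionRing k]

def slopeLine : Option k × k → Set (k × k)
  | (none, c) => {x | x.1 = c}
  | (some m, c) => {x | x.2 = x.1 * m + c}

lemma isPLine_slopeLine (u : Option k × k) : IsPLine k (k × k) (k × k) (slopeLine u) := by
  obtain ⟨_ | m, c⟩ := u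
  · refine ⟨(c, 0), (0, 1), by simp, ?_⟩
    ext ⟨x, y⟩
    simp [slopeLine, eq_comm]
  · refine ⟨(0, c), (1, m), by simp, ?_⟩
    ext ⟨x, y⟩
    simp [slopeLine]

lemma slopeLine_injective : Function.Injective (slopeLine (k := k)) := by
  rintro ⟨_ | m, c⟩ ⟨_ | m', c'⟩ h <;>
    simp only [slopeLine, Set.ext_iff, Set.mem_ofPred_eq] at h
  · simpa using h (c, 0)
  · have h₀ := (h (c, 0)).1 rfl
    have h₁ := (h (c, 1)).1 rfl
    exact absurd (h₁.trans h₀.symm) one_ne_zero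
  · have h₀ := (h (0, c)).1 (by simp)
    have h₁ := (h (1, m + c)).1 (by simp)
    exact absurd (h₁.trans h₀.symm) one_ne_zero
  · have h₀ := (h (0, c)).1 (by simp)
    have h₁ := (h (1, m + c)).1 (by simp)
    simp only [zero_mul, zero_add, one_mul] at h₀ h₁
    subst h₀
    simp_all

lemma exists_slopeLine_eq {s : Set (k × k)} (hs : IsPLine k (k × k) (k × k) s) :
    ∃ u, slopeLine u = s := by
  obtain ⟨⟨x₀, y₀⟩, ⟨a, d⟩, hv, rfl⟩ := hs
  by_cases ha : a = 0
  · subst ha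
    have hd : d ≠ 0 := by simpa using hv
    refine ⟨(none, x₀), ?_⟩
    ext ⟨x, y⟩
    simp only [slopeLine, Set.mem_ofPred_eq, vadd_eq_add, Prod.smul_mk, Prod.mk_add_mk,
      Prod.mk.injEq, smul_eq_mul, mul_zero, zero_add]
    refine ⟨fun hx => ⟨(y - y₀) * d⁻¹, hx, ?_⟩, fun ⟨t, hx, _⟩ => hx⟩
    rw [mul_assoc, inv_mul_cancel₀ hd, mul_one, sub_add_cancel]
  · refine ⟨(some (a⁻¹ * d), y₀ - x₀ * (a⁻¹ * d)), ?_⟩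
    ext ⟨x, y⟩
    simp only [slopeLine, Set.mem_ofPred_eq, vadd_eq_add, Prod.smul_mk, Prod.mk_add_mk,
      Prod.mk.injEq, smul_eq_mul]
    constructor
    · intro hy
      refine ⟨(x - x₀) * a⁻¹, ?_, ?_⟩
      · rw [mul_assoc, inv_mul_cancel₀ ha, mul_one, sub_add_cancel]
      · rw [hy, mul_assoc, sub_mul]; abel
    · rintro ⟨t, rfl, rfl⟩
      rw [add_mul, mul_assoc, ← mul_assoc a, mul_inv_cancel₀ ha, one_mul]; abel

lemma exists_mul_add_eq_mul_add_iff (m m' c c' : k) :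
    (∃ x : k, x * m + c = x * m' + c') ↔ m ≠ m' ∨ c = c' := by
  constructor
  · rintro ⟨x, hx⟩
    by_cases hm : m = m'
    · exact Or.inr (add_left_cancel (hm ▸ hx))
    · exact Or.inl hm
  · rintro (hm | rfl)
    · refine ⟨(c' - c) * (m - m')⁻¹, ?_⟩
      have h : (c' - c) * (m - m')⁻¹ * (m - m') = c' - c := by
        rw [mul_assoc, inv_mul_cancel₀ (sub_ne_zero.mpr hm), mul_one]
      rw [mul_sub] at h
      linear_combination (norm := noncomm_ring) h
    · exact ⟨0, by simp⟩

lemma slopeLine_inter_nonempty_iff (u v : Option k × k) :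
    (slopeLine u ∩ slopeLine v).Nonempty ↔ SlopeMeets u v := by
  obtain ⟨_ | m, c⟩ := u <;> obtain ⟨_ | m', c'⟩ := v <;>
    simp only [slopeLine, SlopeMeets, Set.Nonempty, Set.mem_inter_iff, Set.mem_ofPred_eq]
  · simp [Prod.exists]
  · simp
  · simp
  · simp [exists_mul_add_eq_mul_add_iff]

noncomputable def slopeLineRelIso : SlopeMeets (α := k) ≃r PMeets k (k × k) (k × k) where
  toEquiv := Equiv.ofBijective (fun u => ⟨slopeLine u, isPLine_slopeLine u⟩)
    ⟨fun _ _ h => slopeLine_injective (congrArg Subtype.val h),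
      fun s => (exists_slopeLine_eq s.2).imp fun _ hu => Subtype.ext hu⟩
  map_rel_iff' {u v} := slopeLine_inter_nonempty_iff u v

end Coordinates

section AffinePlane
variable {k V P : Type*} [DivisionRing k] [AddCommGroup V] [Module k V] [AddTorsor V P]

lemma nonempty_affineEquiv_prod_of_rank_eq_two (h : Module.rank k V = 2) :
    Nonempty (P ≃ᵃ[k] k × k) := by
  obtain ⟨f⟩ := nonempty_linearEquiv_of_lift_rank_eq (R := k) (M := V) (M' := k × k)
    (by simp [h, one_add_one_eq_two])
  exact ⟨(AffineEquiv.vaddConst k (Classical.arbitrary P)).symm.trans f.toAffineEquiv⟩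

noncomputable def pmeetsRelIsoSlopeMeets (h : Module.rank k V = 2) :
    PMeets k V P ≃r SlopeMeets (α := k) :=
  (nonempty_affineEquiv_prod_of_rank_eq_two h).some.plineRelIso.trans slopeLineRelIso.symm

end AffinePlane

variable (k' V' P' : Type*) [DivisionRing k'] [AddCommGroup V'] [Module k' V'] [AddTorsor V' P']

/-- The Plücker spaces on two affine planes are isomorphic if and only if the planes have
the same order (the common cardinality of all lines, i.e. of the ground field). -/
theorem stmt15 (hdim : Module.rank k V = 2) (hdim' : Module.rank k' V' = 2) :
    (∃ φ : PLine k V P ≃ PLine k' V' P',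
        ∀ a b : PLine k V P, PMeets k V P a b ↔ PMeets k' V' P' (φ a) (φ b)) ↔
      Nonempty (k ≃ k') := by
  rw [← nonempty_slopeMeets_relIso_iff]
  let E := pmeetsRelIsoSlopeMeets (P := P) hdim
  let E' := pmeetsRelIsoSlopeMeets (P := P') hdim'
  constructor
  · rintro ⟨φ, hφ⟩
    exact ⟨E.symm.trans ((⟨φ, (hφ _ _).symm⟩ : PMeets k V P ≃r PMeets k' V' P').trans E')⟩
  · rintro ⟨ψ⟩
    let φ := E.trans (ψ.trans E'.symm)
    exact ⟨φ.toEquiv, fun a b => φ.map_rel_iff.symm⟩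
end

section
/- If n ≥ 3, m ≥ 3, h ≥ 1 are integers with n − 1 = h(m − 1) and ∑_{i=0}^{n-1} 2^i = ∑_{i=0}^{m-1} 2^{hi}, then h = 1 and n = m. -/
/- Since `n - 1 = h * (m - 1)`, the exponents `h * i` (`i < m`) lie in `{0, …, n - 1}`. If
`h ≥ 2` they miss `1`, so `∑_{i<m} 2^{hi}` is a proper subsum of `∑_{i<n} 2^i`, a contradiction;
hence `h = 1` and then `n = m`. -/

open Finset

theorem sum_pow_mul_lt_sum_range_pow {R : Type*} [Semiring R] [PartialOrder R]
    [IsStrictOrderedRing R] {b : R} (hb : 0 < b) {h m : ℕ} (hh : 2 ≤ h) (hm : 2 ≤ m) :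
    ∑ i ∈ range m, b ^ (h * i) < ∑ j ∈ range (h * (m - 1) + 1), b ^ j := by
  have hinj : Set.InjOn (h * ·) (range m : Set ℕ) := fun _ _ _ _ =>
    Nat.eq_of_mul_eq_mul_left (by omega)
  rw [← sum_image hinj]
  refine sum_lt_sum_of_subset (i := 1) ?_ ?_ ?_ (pow_pos hb 1) fun j _ _ => (pow_pos hb j).le
  · intro j hj
    obtain ⟨i, hi, rfl⟩ := mem_image.mp hj
    have : h * i ≤ h * (m - 1) := Nat.mul_le_mul_left _ (by grind)
    exact mem_range.mpr (by omega)
  · have : 1 ≤ h * (m - 1) := Nat.mul_pos (by omega) (by omega)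
    exact mem_range.mpr (by omega)
  · simp only [mem_image, not_exists, not_and]
    intro i _ hi
    have := Nat.eq_one_of_mul_eq_one_right hi
    omega

theorem stmt17_general (n m h : ℕ) (hm : 3 ≤ m) (hh : 1 ≤ h)
    (h1 : n - 1 = h * (m - 1))
    (h2 : ∑ i ∈ Finset.range n, 2 ^ i = ∑ i ∈ Finset.range m, 2 ^ (h * i)) :
    h = 1 ∧ n = m := by
  have hn : n = h * (m - 1) + 1 := by
    have : 1 ≤ h * (m - 1) := Nat.mul_pos (by omega) (by omega)
    omega
  have hh1 : h = 1 := by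
    by_contra hne
    have hlt := sum_pow_mul_lt_sum_range_pow (R := ℕ) (b := 2) two_pos
      (show 2 ≤ h by omega) (show 2 ≤ m by omega)
    rw [← hn, h2] at hlt
    exact lt_irrefl _ hlt
  subst hh1
  exact ⟨rfl, by omega⟩

/-- Arithmetic lemma: if `n, m ≥ 3`, `h ≥ 1`, `n - 1 = h * (m - 1)` and
`∑_{i<n} 2 ^ i = ∑_{i<m} 2 ^ (h * i)`, then `h = 1` and `n = m`. -/
theorem stmt17 (n m h : ℕ) (hn : 3 ≤ n) (hm : 3 ≤ m) (hh : 1 ≤ h)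
    (h1 : n - 1 = h * (m - 1))
    (h2 : ∑ i ∈ Finset.range n, 2 ^ i = ∑ i ∈ Finset.range m, 2 ^ (h * i)) :
    h = 1 ∧ n = m :=
  stmt17_general n m h hm hh h1 h2
end

section
/- Let A, A' be affine spaces of order two (over GF(2)) with dim A' ≥ 3, and let φ : L → L' be a bijection of line sets taking meeting lines to meeting lines. Then the induced injective point map λ (defined by a ∩ b ↦ φ(a) ∩ φ(b) for adjacent lines) is surjective, hence a collineation. -/
/-!
Over `ZMod 2` a line is just a 2-element set of points, so `φ` is a bijection between the
2-subsets of `P` and of `P'` that preserves meeting. Since `A'` has at least `8` points, hence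
`28` lines, `A` has at least `5` points, so through every point `Q` pass at least four lines.
Their images are pairwise meeting 2-sets; among four such sets two meet the first one in the same
point, and a 2-set meeting three distinct 2-sets through a point contains that point. Hence all
images of lines through `Q` pass through one point `λ Q`, and `φ a = λ '' a` for every line `a`
as soon as `λ` is injective. If `λ Q = λ R` with `Q ≠ R`, pick `S` with `λ S ≠ λ Q`: then the
lines `QS` and `RS` have the same image `{λ Q, λ S}`. Surjectivity follows because every point
of `A'` lies on some `φ a = λ '' a`.
-/
variable (k V P : Type*) [DivisionRing k] [AddCommGroup V] [Module k V] [AddTorsor V P]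

open Function Set

section TwoSets

variable {α : Type*} {s f e₀ e₁ e₂ : Set α} {x y : α}

theorem Set.eq_pair_of_ncard_eq_two (hs : s.ncard = 2) (hxy : x ≠ y) (hx : x ∈ s) (hy : y ∈ s) :
    s = {x, y} :=
  (eq_of_subset_of_ncard_le (pair_subset hx hy) (by rw [hs, ncard_pair hxy])
    (finite_of_ncard_pos (by omega))).symm

theorem Set.mem_of_inter_nonempty_of_ncard_eq_two (hf : f.ncard = 2) (h₀ : e₀.ncard = 2)
    (h₁ : e₁.ncard = 2) (h₂ : e₂.ncard = 2) (h₀₁ : e₀ ≠ e₁) (h₀₂ : e₀ ≠ e₂) (h₁₂ : e₁ ≠ e₂)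
    (hx₀ : x ∈ e₀) (hx₁ : x ∈ e₁) (hx₂ : x ∈ e₂) (hf₀ : (f ∩ e₀).Nonempty)
    (hf₁ : (f ∩ e₁).Nonempty) (hf₂ : (f ∩ e₂).Nonempty) : x ∈ f := by
  by_contra hxf
  have other : ∀ e : Set α, e.ncard = 2 → x ∈ e → (f ∩ e).Nonempty → ∃ y ∈ f, e = {x, y} := by
    rintro e he hxe ⟨y, hyf, hye⟩
    exact ⟨y, hyf, eq_pair_of_ncard_eq_two he (fun h => hxf (h ▸ hyf)) hxe hye⟩
  obtain ⟨y₀, hy₀, rfl⟩ := other e₀ h₀ hx₀ hf₀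
  obtain ⟨y₁, hy₁, rfl⟩ := other e₁ h₁ hx₁ hf₁
  obtain ⟨y₂, hy₂, rfl⟩ := other e₂ h₂ hx₂ hf₂
  have hthree : ({y₀, y₁, y₂} : Set α).ncard = 3 :=
    ncard_eq_three.2 ⟨y₀, y₁, y₂, by rintro rfl; exact h₀₁ rfl, by rintro rfl; exact h₀₂ rfl,
      by rintro rfl; exact h₁₂ rfl, rfl⟩
  have := ncard_le_ncard (insert_subset hy₀ (insert_subset hy₁ (singleton_subset_iff.2 hy₂)))
    (finite_of_ncard_pos (by omega : 0 < f.ncard))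
  omega

theorem Set.exists_mem_of_pairwise_inter_nonempty {e : Fin 4 → Set α} (he : ∀ i, (e i).ncard = 2)
    (hinj : Injective e) (hmeet : ∀ i j, (e i ∩ e j).Nonempty) : ∃ x, ∀ i, x ∈ e i := by
  classical
  obtain ⟨a, b, hab, he₀⟩ := ncard_eq_two.1 (he 0)
  have hb : ∀ k, a ∉ e k → b ∈ e k := by
    intro k hak
    obtain ⟨z, hzk, hz₀⟩ := hmeet k 0
    rw [he₀] at hz₀
    rcases hz₀ with rfl | rfl
    exacts [absurd hzk hak, hzk]
  -- pigeonhole: two of the three sets `e 1, e 2, e 3` meet `e 0 = {a, b}` in the same point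
  obtain ⟨i, j, hij, hsame⟩ := Fintype.exists_ne_map_eq_of_card_lt
    (fun i : Fin 3 => a ∈ e i.succ) (by simp)
  obtain ⟨y, hy₀, hyi, hyj⟩ : ∃ y ∈ e 0, y ∈ e i.succ ∧ y ∈ e j.succ := by
    by_cases ha : a ∈ e i.succ
    · exact ⟨a, by simp [he₀], ha, hsame ▸ ha⟩
    · exact ⟨b, by simp [he₀], hb _ ha, hb _ (hsame ▸ ha)⟩
  exact ⟨y, fun k => mem_of_inter_nonempty_of_ncard_eq_two (he k) (he 0) (he i.succ) (he j.succ)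
    (hinj.ne (Fin.succ_ne_zero i).symm) (hinj.ne (Fin.succ_ne_zero j).symm)
    (hinj.ne ((Fin.succ_injective 3).ne hij)) hy₀ hyi hyj (hmeet k 0) (hmeet k _) (hmeet k _)⟩

end TwoSets

section Lines

variable {V P : Type*} [AddCommGroup V] [Module (ZMod 2) V] [AddTorsor V P]

theorem setOf_smul_vadd_eq_pair (v : V) (p : P) :
    {q | ∃ t : ZMod 2, q = t • v +ᵥ p} = {p, v +ᵥ p} := by
  ext q
  constructor
  · rintro ⟨t, rfl⟩
    obtain rfl | rfl : t = 0 ∨ t = 1 := by revert t; decide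
    exacts [by simp, by simp]
  · rintro (rfl | rfl)
    exacts [⟨0, by simp⟩, ⟨1, by simp⟩]

theorem isPLine_iff_ncard_eq_two {s : Set P} : IsPLine (ZMod 2) V P s ↔ s.ncard = 2 := by
  rw [ncard_eq_two]
  constructor
  · rintro ⟨p, v, hv, rfl⟩
    refine ⟨p, v +ᵥ p, ?_, setOf_smul_vadd_eq_pair v p⟩
    rwa [Ne, eq_vadd_iff_vsub_eq, vsub_self, eq_comm]
  · rintro ⟨p, q, hpq, rfl⟩
    exact ⟨p, q -ᵥ p, vsub_ne_zero.2 hpq.symm, by rw [setOf_smul_vadd_eq_pair, vsub_vadd]⟩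

theorem PLine.ncard_eq_two (a : PLine (ZMod 2) V P) : a.1.ncard = 2 :=
  isPLine_iff_ncard_eq_two.1 a.2

def PLine.through_s19 (p q : P) (h : p ≠ q) : PLine (ZMod 2) V P :=
  ⟨{p, q}, isPLine_iff_ncard_eq_two.2 (ncard_pair h)⟩

theorem PLine.left_mem_through_s19 (p q : P) (h : p ≠ q) :
    p ∈ (PLine.through_s19 p q h : PLine (ZMod 2) V P).1 :=
  mem_insert p {q}

theorem PLine.right_mem_through_s19 (p q : P) (h : p ≠ q) :
    q ∈ (PLine.through_s19 p q h : PLine (ZMod 2) V P).1 :=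
  mem_insert_of_mem p rfl

theorem collinear_triple_iff_zmod_two (Q R S : P) :
    Collinear (ZMod 2) ({Q, R, S} : Set P) ↔ Q = R ∨ Q = S ∨ R = S := by
  constructor
  · intro h
    by_contra! hne
    obtain ⟨v, hv⟩ := (collinear_iff_of_mem (mem_insert Q _)).1 h
    have hsub : ({Q, R, S} : Set P) ⊆ {Q, v +ᵥ Q} := by
      rw [← setOf_smul_vadd_eq_pair]; exact hv
    have h3 := ncard_le_ncard hsub (toFinite _)
    rw [ncard_eq_three.2 ⟨Q, R, S, hne.1, hne.2.1, hne.2.2, rfl⟩] at h3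
    have h2 := ncard_insert_le Q {v +ᵥ Q}
    rw [ncard_singleton] at h2
    omega
  · rintro (rfl | rfl | rfl) <;> simp [collinear_pair, Set.pair_comm]

theorem PLine.through_injective {ι : Type*} {Q : P} {g : ι → P} (hg : Injective g)
    (hgQ : ∀ i, g i ≠ Q) :
    Injective fun i => (PLine.through_s19 Q (g i) (hgQ i).symm : PLine (ZMod 2) V P) := by
  intro i j hij
  have hij' : ({Q, g i} : Set P) = {Q, g j} := congrArg Subtype.val hij
  have : g i ∈ ({Q, g j} : Set P) := hij' ▸ mem_insert_of_mem Q rfl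
  rcases this with h | h
  exacts [absurd h (hgQ i), hg h]

def PLine.ofFinset (s : {s : Finset P // s.card = 2}) : PLine (ZMod 2) V P :=
  ⟨s.1, isPLine_iff_ncard_eq_two.2 (by rw [ncard_coe_finset]; exact s.2)⟩

theorem PLine.ofFinset_bijective : Bijective (PLine.ofFinset : _ → PLine (ZMod 2) V P) := by
  refine ⟨fun s t h => Subtype.ext (Finset.coe_injective (congrArg Subtype.val h)), fun a => ?_⟩
  classical
  obtain ⟨p, q, hpq, ha⟩ := Set.ncard_eq_two.1 a.ncard_eq_two
  exact ⟨⟨{p, q}, Finset.card_pair hpq⟩, Subtype.ext (by simp [PLine.ofFinset, ha])⟩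

theorem PLine.natCard_eq [Finite P] : Nat.card (PLine (ZMod 2) V P) = (Nat.card P).choose 2 := by
  have := Fintype.ofFinite P
  rw [← Nat.card_congr (Equiv.ofBijective _ PLine.ofFinset_bijective), Nat.card_eq_fintype_card,
    Fintype.card_finset_len, Nat.card_eq_fintype_card]

theorem PLine.choose_two_le_natCard [Finite (PLine (ZMod 2) V P)] {n : ℕ} (e : Fin n ↪ P) :
    n.choose 2 ≤ Nat.card (PLine (ZMod 2) V P) := by
  classical
  have hmap : Injective fun s : {s : Finset (Fin n) // s.card = 2} =>
      (PLine.ofFinset ⟨s.1.map e, by simp [s.2]⟩ : PLine (ZMod 2) V P) := fun s t h =>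
    Subtype.ext (Finset.map_injective e (congrArg Subtype.val (PLine.ofFinset_bijective.1 h)))
  simpa [Fintype.card_finset_len] using Nat.card_le_card_of_injective _ hmap

theorem nonempty_fin_five_embedding_of_equiv {V' P' : Type*} [AddCommGroup V']
    [Module (ZMod 2) V'] [AddTorsor V' P'] (φ : PLine (ZMod 2) V P ≃ PLine (ZMod 2) V' P')
    (e : Fin 8 ↪ P') : Nonempty (Fin 5 ↪ P) := by
  by_contra h
  have : Finite P := by
    by_contra hinf
    rw [not_finite_iff_infinite] at hinf
    exact h ⟨Fin.valEmbedding.trans (Infinite.natEmbedding P)⟩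
  have := Fintype.ofFinite P
  have hP : Nat.card P ≤ 4 := by
    by_contra! hP
    exact h (Function.Embedding.nonempty_of_card_le (by simpa using Nat.succ_le_of_lt hP))
  have : Finite (PLine (ZMod 2) V' P') := Finite.of_equiv _ φ
  have h28 := PLine.choose_two_le_natCard e
  rw [← Nat.card_congr φ, PLine.natCard_eq] at h28
  exact absurd (h28.trans (Nat.choose_le_choose 2 hP)) (by decide)

theorem nonempty_fin_two_pow_embedding_of_le_rank {n : ℕ} (h : n ≤ Module.rank (ZMod 2) V) :
    Nonempty (Fin (2 ^ n) ↪ P) := by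
  obtain ⟨v, hv⟩ := exists_linearIndependent_of_le_rank h
  obtain ⟨p⟩ : Nonempty P := inferInstance
  have hcard : Fintype.card (Fin n → ZMod 2) = 2 ^ n := by simp
  exact ⟨(Fintype.equivFinOfCardEq hcard).symm.toEmbedding.trans
    ((⟨_, hv.fintypeLinearCombination_injective⟩ : (Fin n → ZMod 2) ↪ V).trans
      (Equiv.vaddConst p).toEmbedding)⟩

theorem exists_pLine_notMem (e : Fin 3 ↪ P) (x : P) : ∃ a : PLine (ZMod 2) V P, x ∉ a.1 := by
  classical
  obtain ⟨y, hy, hyx⟩ := Finset.exists_mem_notMem_of_card_lt_card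
    (s := {x}) (t := Finset.univ.map e) (by simp)
  obtain ⟨z, hz, hzxy⟩ := Finset.exists_mem_notMem_of_card_lt_card
    (s := {x, y}) (t := Finset.univ.map e) (Finset.card_le_two.trans_lt (by simp))
  simp only [Finset.mem_insert, Finset.mem_singleton, not_or] at hyx hzxy
  exact ⟨PLine.through_s19 y z (Ne.symm hzxy.2), by
    rintro (h | h)
    exacts [hyx h.symm, hzxy.1 h.symm]⟩

theorem exists_pLine_mem [Nontrivial P] (x : P) : ∃ a : PLine (ZMod 2) V P, x ∈ a.1 :=
  let ⟨y, hy⟩ := exists_ne x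
  ⟨PLine.through_s19 x y hy.symm, PLine.left_mem_through_s19 _ _ _⟩

end Lines

theorem Function.Embedding.exists_forall_ne {α : Type*} {n : ℕ} (f : Fin (n + 1) ↪ α) (x : α) :
    ∃ g : Fin n ↪ α, ∀ i, g i ≠ x := by
  by_cases hx : ∃ j, f j = x
  · obtain ⟨j, rfl⟩ := hx
    exact ⟨(Fin.succAboveEmb j).trans f, fun i h => Fin.succAbove_ne j i (f.injective h)⟩
  · push Not at hx
    exact ⟨Fin.castSuccEmb.trans f, fun i => hx _⟩

section PointMap

variable {V P V' P' : Type*} [AddCommGroup V] [Module (ZMod 2) V] [AddTorsor V P]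
  [AddCommGroup V'] [Module (ZMod 2) V'] [AddTorsor V' P']

theorem exists_forall_mem_apply_of_mem {φ : PLine (ZMod 2) V P → PLine (ZMod 2) V' P'}
    (hφ : Injective φ) (hmeet : ∀ a b, PMeets (ZMod 2) V P a b → PMeets (ZMod 2) V' P' (φ a) (φ b))
    (h5 : Nonempty (Fin 5 ↪ P)) (Q : P) : ∃ x, ∀ a, Q ∈ a.1 → x ∈ (φ a).1 := by
  obtain ⟨g, hgQ⟩ := h5.some.exists_forall_ne Q
  set L := fun i => (PLine.through_s19 Q (g i) (hgQ i).symm : PLine (ZMod 2) V P)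
  have hL : Injective L := PLine.through_injective g.injective hgQ
  have hQL : ∀ i, Q ∈ (L i).1 := fun i => PLine.left_mem_through_s19 _ _ _
  have hφL : Injective fun i => (φ (L i)).1 := Subtype.val_injective.comp (hφ.comp hL)
  obtain ⟨x, hx⟩ := exists_mem_of_pairwise_inter_nonempty (fun i => (φ (L i)).ncard_eq_two) hφL
    fun i j => hmeet _ _ ⟨Q, hQL i, hQL j⟩
  refine ⟨x, fun a hQa => ?_⟩
  have hmeetL : ∀ i, ((φ a).1 ∩ (φ (L i)).1).Nonempty := fun i => hmeet _ _ ⟨Q, hQa, hQL i⟩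
  exact mem_of_inter_nonempty_of_ncard_eq_two (φ a).ncard_eq_two (φ (L 0)).ncard_eq_two
    (φ (L 1)).ncard_eq_two (φ (L 2)).ncard_eq_two (hφL.ne (by decide)) (hφL.ne (by decide))
    (hφL.ne (by decide)) (hx 0) (hx 1) (hx 2) (hmeetL 0) (hmeetL 1) (hmeetL 2)

variable {φ : PLine (ZMod 2) V P ≃ PLine (ZMod 2) V' P'} {lam : P → P'}

theorem eq_pair_of_forall_mem (hlam : ∀ Q a, Q ∈ a.1 → lam Q ∈ (φ a).1)
    {a : PLine (ZMod 2) V P} {p q : P} (hp : p ∈ a.1) (hq : q ∈ a.1) (hpq : lam p ≠ lam q) :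
    (φ a).1 = {lam p, lam q} :=
  eq_pair_of_ncard_eq_two (φ a).ncard_eq_two hpq (hlam p a hp) (hlam q a hq)

theorem injective_of_forall_mem (hlam : ∀ Q a, Q ∈ a.1 → lam Q ∈ (φ a).1)
    (hmiss : ∀ x : P', ∃ a' : PLine (ZMod 2) V' P', x ∉ a'.1) : Injective lam := by
  have hnonconst : ∀ x, ∃ S, lam S ≠ x := by
    intro x
    obtain ⟨a', hxa'⟩ := hmiss x
    obtain ⟨S, hS⟩ := nonempty_of_ncard_ne_zero (by rw [(φ.symm a').ncard_eq_two]; decide)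
    exact ⟨S, fun h => hxa' (by simpa [h] using hlam S _ hS)⟩
  intro Q R hQR
  by_contra hne
  obtain ⟨S, hS⟩ := hnonconst (lam Q)
  have hSQ : S ≠ Q := by rintro rfl; exact hS rfl
  have hSR : S ≠ R := by rintro rfl; exact hS hQR.symm
  have hQS := eq_pair_of_forall_mem hlam (PLine.left_mem_through_s19 Q S hSQ.symm)
    (PLine.right_mem_through_s19 Q S hSQ.symm) hS.symm
  have hRS := eq_pair_of_forall_mem hlam (PLine.left_mem_through_s19 R S hSR.symm)
    (PLine.right_mem_through_s19 R S hSR.symm) (hQR ▸ hS.symm)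
  have himg : (φ (PLine.through_s19 Q S hSQ.symm)).1 = (φ (PLine.through_s19 R S hSR.symm)).1 := by
    rw [hQS, hRS, hQR]
  have hlines : ({Q, S} : Set P) = {R, S} := congrArg Subtype.val (φ.injective (Subtype.ext himg))
  have : Q ∈ ({R, S} : Set P) := hlines ▸ mem_insert Q {S}
  rcases this with h | h
  exacts [hne h, hSQ h.symm]

theorem image_eq_of_forall_mem (hlam : ∀ Q a, Q ∈ a.1 → lam Q ∈ (φ a).1) (hinj : Injective lam)
    (a : PLine (ZMod 2) V P) : (φ a).1 = lam '' a.1 := by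
  obtain ⟨p, q, hpq, ha⟩ := Set.ncard_eq_two.1 a.ncard_eq_two
  rw [ha, image_pair]
  exact eq_pair_of_forall_mem hlam (ha ▸ mem_insert p {q}) (ha ▸ mem_insert_of_mem p rfl)
    (hinj.ne hpq)

theorem surjective_of_forall_mem (hlam : ∀ Q a, Q ∈ a.1 → lam Q ∈ (φ a).1) (hinj : Injective lam)
    (hcover : ∀ x : P', ∃ a' : PLine (ZMod 2) V' P', x ∈ a'.1) : Surjective lam := by
  intro x
  obtain ⟨a', hxa'⟩ := hcover x
  rw [← φ.apply_symm_apply a', image_eq_of_forall_mem hlam hinj] at hxa'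
  obtain ⟨Q, -, hQ⟩ := hxa'
  exact ⟨Q, hQ⟩

end PointMap

variable (V' P' : Type*) [AddCommGroup V'] [Module (ZMod 2) V'] [AddTorsor V' P']

/-- For affine spaces of order two with `dim A' ≥ 3` and a bijection `φ` of the line sets
taking meeting lines to meeting lines, the induced injective point map `λ` is surjective,
hence a collineation. -/
theorem stmt19 {V P : Type*} [AddCommGroup V] [Module (ZMod 2) V] [AddTorsor V P]
    (hdim' : 3 ≤ Module.rank (ZMod 2) V')
    (φ : PLine (ZMod 2) V P ≃ PLine (ZMod 2) V' P')
    (hmono : ∀ a b : PLine (ZMod 2) V P,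
      PMeets (ZMod 2) V P a b → PMeets (ZMod 2) V' P' (φ a) (φ b)) :
    ∃ lam : P → P',
      Function.Bijective lam ∧
      (∀ a b : PLine (ZMod 2) V P, a ≠ b → ∀ Q : P, Q ∈ a.1 ∩ b.1 →
        lam Q ∈ (φ a).1 ∩ (φ b).1) ∧
      (∀ Q R S : P,
        Collinear (ZMod 2) ({Q, R, S} : Set P) ↔
          Collinear (ZMod 2) ({lam Q, lam R, lam S} : Set P')) := by
  obtain ⟨e⟩ : Nonempty (Fin 8 ↪ P') := nonempty_fin_two_pow_embedding_of_le_rank hdim'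
  choose lam hlam using
    exists_forall_mem_apply_of_mem φ.injective hmono (nonempty_fin_five_embedding_of_equiv φ e)
  have hinj : Injective lam :=
    injective_of_forall_mem hlam (exists_pLine_notMem ((Fin.castLEEmb (by norm_num)).trans e))
  have : Nontrivial P' := e.injective.nontrivial
  refine ⟨lam, ⟨hinj, surjective_of_forall_mem hlam hinj exists_pLine_mem⟩,
    fun a b _ Q hQ => ⟨hlam Q a hQ.1, hlam Q b hQ.2⟩, fun Q R S => ?_⟩
  rw [collinear_triple_iff_zmod_two, collinear_triple_iff_zmod_two, hinj.eq_iff, hinj.eq_iff,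
    hinj.eq_iff]
end
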